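/- arXiv:1310.1907 — 9 statements merged into one kernel-verified Lean document; each statement's English description precedes it below -/
import Mathlib

section
/- Let Γ = ℤ^n be a bilinear lattice with an exceptional sequence E = (e_1,…,e_n) satisfying ℤE = Γ, and let C be the matrix with ⟨x,y⟩ = xᵀCy. Then C is invertible, and the automorphism x ↦ −C^{-1}Cᵀx equals s_E = s_{e_1}∘⋯∘s_{e_n} and satisfies ⟨y, c(x)⟩ = −⟨x,y⟩ for all x, y ∈ Γ. -/
/-!
Each reflection `s_a` in a pseudo-real root `a` satisfies `⟨a, s_a x⟩ = -⟨x, a⟩`, and it fixes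
`⟨u, ·⟩` whenever `⟨u, a⟩ = 0` and `⟨·, v⟩` whenever `⟨a, v⟩ = 0`. For an exceptional sequence,
`⟨e_i, s_{e_1} ⋯ s_{e_n} x⟩` thus passes unchanged through `s_{e_1}, …, s_{e_{i-1}}`, is negated
and transposed by `s_{e_i}`, and then `⟨·, e_i⟩` passes unchanged through `s_{e_{i+1}}, …, s_{e_n}`.
So `⟨y, s_E x⟩ = -⟨x, y⟩` for `y = e_i`, hence for all `y` since the `e_i` span `Γ`. In matrix
form this reads `C s_E x = -Cᵀ x`, and `det C ≠ 0` is the non-degeneracy of the form.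
-/

open Matrix

/-- An element `a` is a pseudo-real root if `⟨a,a⟩ > 0` and `⟨a,a⟩` divides
`⟨a,x⟩` and `⟨x,a⟩` for all `x`. -/
def IsPseudoReal {Γ : Type} [AddCommGroup Γ] (B : Γ →ₗ[ℤ] Γ →ₗ[ℤ] ℤ) (a : Γ) : Prop :=
  0 < B a a ∧ ∀ x : Γ, B a a ∣ B a x ∧ B a a ∣ B x a

/-- Non-degeneracy of the bilinear form. -/
def Nondeg {Γ : Type} [AddCommGroup Γ] (B : Γ →ₗ[ℤ] Γ →ₗ[ℤ] ℤ) : Prop :=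
  (∀ x, (∀ y, B x y = 0) → x = 0) ∧ (∀ y, (∀ x, B x y = 0) → y = 0)

/-- The reflection `s_a(x) = x - 2((x,a)/(a,a)) • a`, where `(x,y) = ⟨x,y⟩ + ⟨y,x⟩`. -/
def sRefl {Γ : Type} [AddCommGroup Γ] (B : Γ →ₗ[ℤ] Γ →ₗ[ℤ] ℤ) (a x : Γ) : Γ :=
  x - ((2 * (B x a + B a x)) / (2 * B a a)) • a

/-- `s_E = s_{e_1} ∘ ⋯ ∘ s_{e_r}` for a list `E = [e_1, …, e_r]`. -/
def sSeq {Γ : Type} [AddCommGroup Γ] (B : Γ →ₗ[ℤ] Γ →ₗ[ℤ] ℤ) (l : List Γ) (x : Γ) : Γ :=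
  l.foldr (sRefl B) x

section Reflection

variable {Γ : Type} [AddCommGroup Γ] (B : Γ →ₗ[ℤ] Γ →ₗ[ℤ] ℤ)

lemma IsPseudoReal.sRefl_coeff_mul {a : Γ} (h : IsPseudoReal B a) (x : Γ) :
    (2 * (B x a + B a x)) / (2 * B a a) * B a a = B x a + B a x := by
  rw [Int.mul_ediv_mul_of_pos _ _ two_pos]
  exact Int.ediv_mul_cancel (dvd_add (h.2 x).2 (h.2 x).1)

lemma IsPseudoReal.apply_sRefl_self {a : Γ} (h : IsPseudoReal B a) (x : Γ) :
    B a (sRefl B a x) = -B x a := by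
  rw [sRefl, map_sub, map_zsmul, smul_eq_mul, h.sRefl_coeff_mul B x]
  ring

lemma apply_sRefl_of_apply_eq_zero {u a : Γ} (hua : B u a = 0) (x : Γ) :
    B u (sRefl B a x) = B u x := by
  rw [sRefl, map_sub, map_zsmul, smul_eq_mul, hua, mul_zero, sub_zero]

lemma sRefl_apply_of_apply_eq_zero {a v : Γ} (hav : B a v = 0) (x : Γ) :
    B (sRefl B a x) v = B x v := by
  rw [sRefl, map_sub, map_zsmul, LinearMap.sub_apply, LinearMap.smul_apply, smul_eq_mul, hav,
    mul_zero, sub_zero]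

lemma sSeq_cons (a : Γ) (l : List Γ) (x : Γ) :
    sSeq B (a :: l) x = sRefl B a (sSeq B l x) :=
  rfl

lemma sSeq_apply_of_forall_apply_eq_zero {v : Γ} {l : List Γ} (hl : ∀ a ∈ l, B a v = 0)
    (x : Γ) : B (sSeq B l x) v = B x v := by
  induction l with
  | nil => rfl
  | cons a l ih =>
    rw [List.forall_mem_cons] at hl
    rw [sSeq_cons, sRefl_apply_of_apply_eq_zero B hl.1, ih hl.2]

/-- `l.Pairwise (fun a b => B b a = 0)` says that `l` is an exceptional sequence. -/
lemma apply_sSeq_of_pairwise {l : List Γ} (hroot : ∀ a ∈ l, IsPseudoReal B a)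
    (hexc : l.Pairwise fun a b => B b a = 0) {a : Γ} (ha : a ∈ l) (x : Γ) :
    B a (sSeq B l x) = -B x a := by
  induction l with
  | nil => exact absurd ha List.not_mem_nil
  | cons b l ih =>
    rw [List.forall_mem_cons] at hroot
    rw [List.pairwise_cons] at hexc
    rw [sSeq_cons]
    rcases List.mem_cons.mp ha with rfl | ha
    · rw [hroot.1.apply_sRefl_self, sSeq_apply_of_forall_apply_eq_zero B hexc.1]
    · rw [apply_sRefl_of_apply_eq_zero B (hexc.1 a ha), ih hroot.2 hexc.2 ha]

lemma apply_sSeq_ofFn_eq_neg {n : ℕ} {e : Fin n → Γ} (hroot : ∀ i, IsPseudoReal B (e i))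
    (hexc : ∀ i j : Fin n, j < i → B (e i) (e j) = 0)
    (hcomplete : Submodule.span ℤ (Set.range e) = ⊤) (x y : Γ) :
    B y (sSeq B (List.ofFn e) x) = -B x y := by
  have hflip : B.flip (sSeq B (List.ofFn e) x) = -B x := by
    refine LinearMap.ext_on_range hcomplete fun i => ?_
    exact apply_sSeq_of_pairwise B (List.forall_mem_ofFn_iff.mpr hroot)
      (List.pairwise_ofFn.mpr fun j i hji => hexc i j hji) ((List.mem_ofFn' e _).mpr ⟨i, rfl⟩) x
  exact LinearMap.congr_fun hflip y

end Reflection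

section MatrixForm

variable {ι R : Type*} [Fintype ι] [DecidableEq ι] [CommRing R]

lemma det_ne_zero_of_forall_dotProduct_mulVec [IsDomain R] {C : Matrix ι ι R}
    (h : ∀ y, (∀ x, x ⬝ᵥ C *ᵥ y = 0) → y = 0) : C.det ≠ 0 := by
  intro hdet
  obtain ⟨v, hv, hCv⟩ := exists_mulVec_eq_zero_iff.mpr hdet
  exact hv (h v fun x => by rw [hCv, dotProduct_zero])

lemma mulVec_eq_neg_transpose_mulVec_of_forall_dotProduct {C : Matrix ι ι R} {x z : ι → R}
    (h : ∀ y, y ⬝ᵥ C *ᵥ z = -(x ⬝ᵥ C *ᵥ y)) : C *ᵥ z = -(Cᵀ *ᵥ x) := by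
  funext i
  have hi := h (Pi.single i 1)
  rw [single_dotProduct, one_mul, dotProduct_mulVec, dotProduct_single, mul_one] at hi
  rw [hi, Pi.neg_apply, ← vecMul_transpose, transpose_transpose]

end MatrixForm

/-- The Coxeter transformation `x ↦ -C⁻¹Cᵀx` (expressed as `C • c(x) = -Cᵀ • x`) equals
the composite of reflections `s_E` for any complete exceptional sequence `E`. -/
theorem statement4 (n : ℕ) (C : Matrix (Fin n) (Fin n) ℤ)
    (B : (Fin n → ℤ) →ₗ[ℤ] (Fin n → ℤ) →ₗ[ℤ] ℤ)
    (hBC : ∀ x y : Fin n → ℤ, B x y = x ⬝ᵥ C.mulVec y)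
    (hB : Nondeg B)
    (e : Fin n → (Fin n → ℤ))
    (hroot : ∀ i, IsPseudoReal B (e i))
    (hexc : ∀ i j : Fin n, j < i → B (e i) (e j) = 0)
    (hcomplete : Submodule.span ℤ (Set.range e) = ⊤) :
    C.det ≠ 0 ∧
    (∀ x : Fin n → ℤ, C.mulVec (sSeq B (List.ofFn e) x) = -(Cᵀ.mulVec x)) ∧
    (∀ x y : Fin n → ℤ, B y (sSeq B (List.ofFn e) x) = - B x y) := by
  have hcox := apply_sSeq_ofFn_eq_neg B hroot hexc hcomplete
  refine ⟨?_, fun x => ?_, hcox⟩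
  · exact det_ne_zero_of_forall_dotProduct_mulVec fun y hy => hB.2 y fun x => by rw [hBC, hy]
  · exact mulVec_eq_neg_transpose_mulVec_of_forall_dotProduct fun y => by
      rw [← hBC, ← hBC, hcox]
end

section
/- The braid group B_r acts on the set of exceptional sequences of length r in a bilinear lattice Γ, where the generator σ_i sends (e_1,…,e_r) to (e_1,…,e_{i-1}, e_{i+1}, s_{e_{i+1}}(e_i), e_{i+2},…,e_r). In particular: (a) each σ_i sends exceptional sequences to exceptional sequences; (b) σ_i has inverse sending (e_1,…,e_r) to (e_1,…,e_{i-1}, s_{e_i}(e_{i+1}), e_i, e_{i+2},…,e_r); (c) the braid relations σ_iσ_j = σ_jσ_i for |i−j|>1 and σ_iσ_{i+1}σ_i = σ_{i+1}σ_iσ_{i+1} hold on exceptional sequences. -/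
/-- An exceptional sequence of length `r`, indexed by the first `r` natural numbers:
each `e i` (for `i < r`) is a pseudo-real root and `⟨e i, e j⟩ = 0` for `j < i < r`. -/
def IsExcSeq {Γ : Type} [AddCommGroup Γ] (B : Γ →ₗ[ℤ] Γ →ₗ[ℤ] ℤ) (r : ℕ) (e : ℕ → Γ) : Prop :=
  (∀ i < r, IsPseudoReal B (e i)) ∧ ∀ i < r, ∀ j < i, B (e i) (e j) = 0

/-- The braid group generator `σ_i` (0-based, acting on positions `i` and `i+1`):
it replaces `(e i, e (i+1))` by `(e (i+1), s_{e (i+1)}(e i))`. -/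
def braidσ {Γ : Type} [AddCommGroup Γ] (B : Γ →ₗ[ℤ] Γ →ₗ[ℤ] ℤ) (i : ℕ) (e : ℕ → Γ) : ℕ → Γ :=
  fun j => if j = i then e (i + 1)
    else if j = i + 1 then sRefl B (e (i + 1)) (e i)
    else e j

/-- The inverse braid generator: it replaces `(e i, e (i+1))` by `(s_{e i}(e (i+1)), e i)`. -/
def braidσinv {Γ : Type} [AddCommGroup Γ] (B : Γ →ₗ[ℤ] Γ →ₗ[ℤ] ℤ) (i : ℕ) (e : ℕ → Γ) : ℕ → Γ :=
  fun j => if j = i then sRefl B (e i) (e (i + 1))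
    else if j = i + 1 then e i
    else e j

section Reflection

variable {Γ : Type} [AddCommGroup Γ] (B : Γ →ₗ[ℤ] Γ →ₗ[ℤ] ℤ)

def sReflCoeff (a x : Γ) : ℤ := 2 * (B x a + B a x) / (2 * B a a)

theorem sRefl_eq_sub_smul (a x : Γ) : sRefl B a x = x - sReflCoeff B a x • a := rfl

theorem sRefl_apply_left (a x y : Γ) :
    B (sRefl B a x) y = B x y - sReflCoeff B a x * B a y := by
  simp [sRefl_eq_sub_smul]

theorem sRefl_apply_right (a x y : Γ) :
    B x (sRefl B a y) = B x y - sReflCoeff B a y * B x a := by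
  simp [sRefl_eq_sub_smul]

variable {B}

namespace IsPseudoReal

variable {a b c : Γ}

theorem mul_sReflCoeff (ha : IsPseudoReal B a) (x : Γ) :
    B a a * sReflCoeff B a x = B x a + B a x := by
  rw [sReflCoeff, Int.mul_ediv_mul_of_pos _ _ two_pos,
    Int.mul_ediv_cancel' (dvd_add (ha.2 x).2 (ha.2 x).1)]

theorem sReflCoeff_sub_smul (ha : IsPseudoReal B a) (x y : Γ) (n : ℤ) :
    sReflCoeff B a (x - n • y) = sReflCoeff B a x - n * sReflCoeff B a y := by
  refine mul_left_cancel₀ ha.1.ne' ?_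
  have hxy := ha.mul_sReflCoeff (x - n • y)
  simp only [map_sub, map_zsmul, LinearMap.sub_apply, LinearMap.smul_apply, smul_eq_mul] at hxy
  linear_combination hxy - ha.mul_sReflCoeff x + n * ha.mul_sReflCoeff y

theorem sRefl_sub_smul (ha : IsPseudoReal B a) (x y : Γ) (n : ℤ) :
    sRefl B a (x - n • y) = sRefl B a x - n • sRefl B a y := by
  simp only [sRefl_eq_sub_smul, ha.sReflCoeff_sub_smul]
  module

theorem sRefl_sRefl (ha : IsPseudoReal B a) (x : Γ) : sRefl B a (sRefl B a x) = x := by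
  have hcoeff : sReflCoeff B a (sRefl B a x) = -sReflCoeff B a x := by
    refine mul_left_cancel₀ ha.1.ne' ?_
    have h := ha.mul_sReflCoeff (sRefl B a x)
    rw [sRefl_apply_left, sRefl_apply_right] at h
    linear_combination h - ha.mul_sReflCoeff x
  rw [sRefl_eq_sub_smul B a (sRefl B a x), hcoeff, sRefl_eq_sub_smul]
  module

theorem apply_sRefl_sRefl_add (hc : IsPseudoReal B c) (x y : Γ) :
    B (sRefl B c x) (sRefl B c y) + B (sRefl B c y) (sRefl B c x) = B x y + B y x := by
  simp only [sRefl_apply_left, sRefl_apply_right]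
  linear_combination
    sReflCoeff B c y * hc.mul_sReflCoeff x + sReflCoeff B c x * hc.mul_sReflCoeff y

theorem apply_sRefl_sRefl_self (hc : IsPseudoReal B c) (x : Γ) :
    B (sRefl B c x) (sRefl B c x) = B x x := by
  simp only [sRefl_apply_left, sRefl_apply_right]
  linear_combination sReflCoeff B c x * hc.mul_sReflCoeff x

theorem apply_sRefl_self_s8 (hb : IsPseudoReal B b) (x : Γ) : B (sRefl B b x) b = -B b x := by
  rw [sRefl_apply_left]
  linear_combination -hb.mul_sReflCoeff x

theorem isPseudoReal_sRefl (hb : IsPseudoReal B b) (ha : IsPseudoReal B a) :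
    IsPseudoReal B (sRefl B b a) := by
  have hcoeff : B a a ∣ sReflCoeff B b a * B b b := by
    rw [mul_comm, hb.mul_sReflCoeff]
    exact dvd_add (ha.2 b).1 (ha.2 b).2
  refine ⟨hb.apply_sRefl_sRefl_self a ▸ ha.1, fun x => ?_⟩
  rw [hb.apply_sRefl_sRefl_self, sRefl_apply_left, sRefl_apply_right]
  exact ⟨dvd_sub (ha.2 x).1 (hcoeff.trans (mul_dvd_mul_left _ (hb.2 x).1)),
    dvd_sub (ha.2 x).2 (hcoeff.trans (mul_dvd_mul_left _ (hb.2 x).2))⟩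

theorem sRefl_sRefl_conj (hc : IsPseudoReal B c) (x : Γ) :
    sRefl B c (sRefl B b x) = sRefl B (sRefl B c b) (sRefl B c x) := by
  have hcoeff : sReflCoeff B (sRefl B c b) (sRefl B c x) = sReflCoeff B b x := by
    rw [sReflCoeff, hc.apply_sRefl_sRefl_add, hc.apply_sRefl_sRefl_self, sReflCoeff]
  rw [sRefl_eq_sub_smul B b, hc.sRefl_sub_smul, sRefl_eq_sub_smul B (sRefl B c b), hcoeff]

end IsPseudoReal

end Reflection

section Braid

variable {Γ : Type} [AddCommGroup Γ] {B : Γ →ₗ[ℤ] Γ →ₗ[ℤ] ℤ} {e : ℕ → Γ} {i : ℕ}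

theorem IsExcSeq.braidσ {r : ℕ} (hi : i + 1 < r) (he : IsExcSeq B r e) :
    IsExcSeq B r (braidσ B i e) := by
  obtain ⟨hroot, horth⟩ := he
  have ha := hroot i (by omega)
  have hb := hroot (i + 1) hi
  refine ⟨fun k hk => ?_, fun k hk j hjk => ?_⟩
  · simp only [_root_.braidσ]
    split_ifs
    · exact hb
    · exact hb.isPseudoReal_sRefl ha
    · exact hroot k hk
  · simp only [_root_.braidσ]
    split_ifs <;> subst_vars
    all_goals first
      | omega
      | simp (disch := omega) [hb.apply_sRefl_self_s8, sRefl_apply_left, sRefl_apply_right, horth]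

theorem braidσinv_braidσ (he : IsPseudoReal B (e (i + 1))) :
    braidσinv B i (braidσ B i e) = e := by
  funext k
  simp only [braidσinv, braidσ]
  split_ifs <;> subst_vars <;> first | omega | rfl | exact he.sRefl_sRefl _

theorem braidσ_braidσinv (he : IsPseudoReal B (e i)) : braidσ B i (braidσinv B i e) = e := by
  funext k
  simp only [braidσinv, braidσ]
  split_ifs <;> subst_vars <;> first | omega | rfl | exact he.sRefl_sRefl _

theorem braidσ_comm {j : ℕ} (hij : i + 1 < j) :
    braidσ B i (braidσ B j e) = braidσ B j (braidσ B i e) := by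
  funext k
  simp only [braidσ]
  split_ifs <;> subst_vars <;> first | omega | rfl

theorem braidσ_braid (he : IsPseudoReal B (e (i + 2))) :
    braidσ B i (braidσ B (i + 1) (braidσ B i e)) =
      braidσ B (i + 1) (braidσ B i (braidσ B (i + 1) e)) := by
  funext k
  simp only [braidσ]
  split_ifs <;> subst_vars <;> first | omega | rfl | exact he.sRefl_sRefl_conj _

end Braid

theorem statement8_general (Γ : Type) [AddCommGroup Γ]
    (B : Γ →ₗ[ℤ] Γ →ₗ[ℤ] ℤ) (r : ℕ) :
    (∀ (e : ℕ → Γ) (i : ℕ), i + 1 < r → IsExcSeq B r e → IsExcSeq B r (braidσ B i e)) ∧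
    (∀ (e : ℕ → Γ) (i : ℕ), i + 1 < r → IsExcSeq B r e →
      braidσinv B i (braidσ B i e) = e ∧ braidσ B i (braidσinv B i e) = e) ∧
    (∀ (e : ℕ → Γ) (i j : ℕ), i + 1 < j → j + 1 < r → IsExcSeq B r e →
      braidσ B i (braidσ B j e) = braidσ B j (braidσ B i e)) ∧
    (∀ (e : ℕ → Γ) (i : ℕ), i + 2 < r → IsExcSeq B r e →
      braidσ B i (braidσ B (i + 1) (braidσ B i e)) =
        braidσ B (i + 1) (braidσ B i (braidσ B (i + 1) e))) :=
  ⟨fun _ _ hi he => he.braidσ hi,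
    fun _ i hi he => ⟨braidσinv_braidσ (he.1 _ hi), braidσ_braidσinv (he.1 i (by omega))⟩,
    fun _ _ _ hij _ _ => braidσ_comm hij,
    fun _ _ hi he => braidσ_braid (he.1 _ hi)⟩

/-- The braid group acts on exceptional sequences of length `r`: (a) `σ_i` preserves exceptional
sequences; (b) `σ_i` and `σ_i⁻¹` are mutually inverse; (c) the braid relations hold. -/
theorem statement8 (Γ : Type) [AddCommGroup Γ] [Module.Free ℤ Γ] [Module.Finite ℤ Γ]
    (B : Γ →ₗ[ℤ] Γ →ₗ[ℤ] ℤ) (hB : Nondeg B) (r : ℕ) :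
    (∀ (e : ℕ → Γ) (i : ℕ), i + 1 < r → IsExcSeq B r e → IsExcSeq B r (braidσ B i e)) ∧
    (∀ (e : ℕ → Γ) (i : ℕ), i + 1 < r → IsExcSeq B r e →
      braidσinv B i (braidσ B i e) = e ∧ braidσ B i (braidσinv B i e) = e) ∧
    (∀ (e : ℕ → Γ) (i j : ℕ), i + 1 < j → j + 1 < r → IsExcSeq B r e →
      braidσ B i (braidσ B j e) = braidσ B j (braidσ B i e)) ∧
    (∀ (e : ℕ → Γ) (i : ℕ), i + 2 < r → IsExcSeq B r e →
      braidσ B i (braidσ B (i + 1) (braidσ B i e)) =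
        braidσ B (i + 1) (braidσ B i (braidσ B (i + 1) e))) :=
  statement8_general Γ B r
end

section
/- Every symmetrisable generalised Cartan matrix C of size n arises as the Cartan matrix of a generalised Cartan lattice: there is a non-degenerate bilinear form on ℤ^n and a complete orthogonal exceptional sequence E = (e_1,…,e_n) such that C = (⟨e_i,e_i⟩^{-1}(e_i,e_j))_{i,j}. -/
/-- Every symmetrisable generalised Cartan matrix `C` (so `C i i = 2` and `DC` is symmetric with
nonpositive off-diagonal entries, for some positive diagonal `D`) arises as the Cartan matrix of
a generalised Cartan lattice `(ℤⁿ, E)`: there is a non-degenerate bilinear form and a complete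
orthogonal exceptional sequence `e` with `⟨e i, e i⟩ · C i j = (e i, e j)` for all `i`, `j`. -/
theorem statement10 (n : ℕ) (C : Matrix (Fin n) (Fin n) ℤ)
    (hdiag : ∀ i, C i i = 2)
    (d : Fin n → ℚ) (hd : ∀ i, 0 < d i)
    (hsym : ∀ i j, d i * (C i j : ℚ) = d j * (C j i : ℚ))
    (hoff : ∀ i j, i ≠ j → d i * (C i j : ℚ) ≤ 0) :
    ∃ (B : (Fin n → ℤ) →ₗ[ℤ] (Fin n → ℤ) →ₗ[ℤ] ℤ) (e : Fin n → (Fin n → ℤ)),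
      Nondeg B ∧
      (∀ i, IsPseudoReal B (e i)) ∧
      (∀ i j : Fin n, j < i → B (e i) (e j) = 0) ∧
      (∀ i j : Fin n, i ≠ j → B (e i) (e j) ≤ 0) ∧
      Submodule.span ℤ (Set.range e) = ⊤ ∧
      (∀ i j : Fin n, B (e i) (e i) * C i j = B (e i) (e j) + B (e j) (e i)) := by
  -- integer rescaling of d
  set N : ℤ := ∏ j, ((d j).den : ℤ) with hN
  set d' : Fin n → ℤ := fun i => (d i).num * ∏ j ∈ Finset.univ.erase i, ((d j).den : ℤ) with hd'
  have hcast : ∀ i, (d' i : ℚ) = d i * (N : ℚ) := by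
    intro i
    have h1 : (N : ℚ) = ((d i).den : ℚ) * ∏ j ∈ Finset.univ.erase i, ((d j).den : ℚ) := by
      rw [hN]
      push_cast
      rw [← Finset.mul_prod_erase _ _ (Finset.mem_univ i)]
    have hq : ((d i).num : ℚ) = d i * ((d i).den : ℚ) :=
      (div_eq_iff (by exact_mod_cast (d i).den_pos.ne' : ((d i).den : ℚ) ≠ 0)).1
        (Rat.num_div_den (d i))
    rw [hd']
    push_cast
    rw [h1, hq]
    ring
  have hNpos : (0 : ℚ) < (N : ℚ) := by
    rw [hN]; push_cast
    exact Finset.prod_pos fun j _ => by exact_mod_cast (d j).den_pos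
  have hd'pos : ∀ i, 0 < d' i := by
    intro i
    have : (0 : ℚ) < (d' i : ℚ) := by rw [hcast]; exact mul_pos (hd i) hNpos
    exact_mod_cast this
  have hsym' : ∀ i j, d' i * C i j = d' j * C j i := by
    intro i j
    have : ((d' i * C i j : ℤ) : ℚ) = ((d' j * C j i : ℤ) : ℚ) := by
      push_cast
      rw [hcast, hcast, mul_right_comm, mul_right_comm (d j), hsym]
    exact_mod_cast this
  have hoff' : ∀ i j, i ≠ j → d' i * C i j ≤ 0 := by
    intro i j hij
    have : ((d' i * C i j : ℤ) : ℚ) ≤ 0 := by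
      push_cast
      rw [hcast, mul_right_comm]
      exact mul_nonpos_of_nonpos_of_nonneg (hoff i j hij) (le_of_lt hNpos)
    exact_mod_cast this
  -- the matrix of the form
  set M : Matrix (Fin n) (Fin n) ℤ :=
    fun i j => if i = j then d' i else if i < j then d' i * C i j else 0 with hM
  set B : (Fin n → ℤ) →ₗ[ℤ] (Fin n → ℤ) →ₗ[ℤ] ℤ :=
    Matrix.toLinearMap₂'Aux (RingHom.id ℤ) (RingHom.id ℤ) M with hB
  have happly : ∀ x y : Fin n → ℤ, B x y = ∑ i, ∑ j, y j * (x i * M i j) := by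
    intro x y
    rw [hB, Matrix.toLinearMap₂'Aux, LinearMap.mk₂'ₛₗ_apply]
    simp [smul_eq_mul]
  have hsingle : ∀ i j, B (Pi.single i 1) (Pi.single j 1) = M i j := fun i j =>
    Matrix.toLinearMap₂'Aux_single _ _ M i j
  have hrow : ∀ x : Fin n → ℤ, ∀ i, B (Pi.single i 1) x = ∑ j, x j * M i j := by
    intro x i
    rw [happly]
    rw [Finset.sum_eq_single i]
    · refine Finset.sum_congr rfl fun j _ => ?_
      simp
    · intro k _ hk
      apply Finset.sum_eq_zero
      intro j _
      simp [Pi.single_apply, hk]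
    · simp
  have hcol : ∀ x : Fin n → ℤ, ∀ j, B x (Pi.single j 1) = ∑ i, x i * M i j := by
    intro x j
    rw [happly]
    refine Finset.sum_congr rfl fun i _ => ?_
    rw [Finset.sum_eq_single j]
    · simp [mul_comm]
    · intro k _ hk
      simp [Pi.single_apply, hk]
    · simp
  have hdet : M.det ≠ 0 := by
    have htri : M.BlockTriangular id := by
      intro i j hij
      have hij' : j < i := hij
      show (if i = j then d' i else if i < j then d' i * C i j else 0) = 0
      rw [if_neg (ne_of_gt hij'), if_neg (not_lt.2 (le_of_lt hij'))]
    rw [Matrix.det_of_upperTriangular htri]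
    exact ne_of_gt (Finset.prod_pos fun i _ => by simpa [hM] using hd'pos i)
  have key : ∀ (A : Matrix (Fin n) (Fin n) ℤ), A.det ≠ 0 → ∀ v : Fin n → ℤ,
      A.mulVec v = 0 → v = 0 := by
    intro A hA v hv
    have h2 : A.adjugate.mulVec (A.mulVec v) = A.det • v := by
      rw [Matrix.mulVec_mulVec, Matrix.adjugate_mul, Matrix.smul_mulVec,
        Matrix.one_mulVec]
    rw [hv, Matrix.mulVec_zero] at h2
    funext i
    have := congrFun h2 i
    simp only [Pi.zero_apply, Pi.smul_apply, smul_eq_mul] at this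
    rcases mul_eq_zero.1 this.symm with h | h
    · exact absurd h hA
    · exact h
  refine ⟨B, fun i => Pi.single i 1, ?_, ?_, ?_, ?_, ?_, ?_⟩
  · -- nondegeneracy
    constructor
    · intro x hx
      refine key M.transpose (by rwa [Matrix.det_transpose]) x ?_
      funext j
      have := hx (Pi.single j 1)
      rw [hcol] at this
      simpa [Matrix.mulVec, dotProduct, Matrix.transpose_apply, mul_comm] using this
    · intro y hy
      refine key M hdet y ?_
      funext i
      have := hy (Pi.single i 1)
      rw [hrow] at this
      simpa [Matrix.mulVec, dotProduct, mul_comm] using this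
  · -- pseudo-real
    intro i
    dsimp only
    have hMii : M i i = d' i := by simp [hM]
    have hdvdrow : ∀ j, d' i ∣ M i j := by
      intro j
      simp only [hM]
      split_ifs with h h'
      · exact dvd_refl _
      · exact Dvd.intro _ rfl
      · exact dvd_zero _
    have hdvdcol : ∀ j, d' i ∣ M j i := by
      intro j
      simp only [hM]
      split_ifs with h h'
      · rw [h]
      · exact ⟨C i j, by rw [← hsym' j i]⟩
      · exact dvd_zero _
    refine ⟨?_, fun x => ⟨?_, ?_⟩⟩
    · rw [hsingle, hMii]; exact hd'pos i
    · rw [hsingle, hMii, hrow]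
      exact Finset.dvd_sum fun j _ => Dvd.dvd.mul_left (hdvdrow j) _
    · rw [hsingle, hMii, hcol]
      exact Finset.dvd_sum fun j _ => Dvd.dvd.mul_left (hdvdcol j) _
  · intro i j hji
    dsimp only
    rw [hsingle]
    simp only [hM]
    rw [if_neg (ne_of_gt hji), if_neg (not_lt.2 (le_of_lt hji))]
  · intro i j hij
    dsimp only
    rw [hsingle]
    simp only [hM]
    rw [if_neg hij]
    split_ifs with h
    · exact hoff' i j hij
    · exact le_refl 0
  · have hr : (Set.range fun i => (Pi.single i 1 : Fin n → ℤ)) =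
        Set.range (Pi.basisFun ℤ (Fin n)) := by
      have hfun : (fun i => (Pi.single i 1 : Fin n → ℤ)) = ⇑(Pi.basisFun ℤ (Fin n)) := by
        funext i
        simp [Pi.basisFun_apply, Pi.single]
      rw [hfun]
    rw [hr]
    exact (Pi.basisFun ℤ (Fin n)).span_eq
  · intro i j
    dsimp only
    rw [hsingle, hsingle, hsingle]
    rcases lt_trichotomy i j with h | rfl | h
    · simp only [hM]
      rw [if_pos trivial, if_neg (ne_of_lt h), if_pos h, if_neg (ne_of_gt h),
        if_neg (not_lt.2 (le_of_lt h)), add_zero]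
    · rw [hdiag i]; ring
    · simp only [hM]
      rw [if_pos trivial, if_neg (ne_of_gt h), if_neg (not_lt.2 (le_of_lt h)), if_neg (ne_of_lt h),
        if_pos h, zero_add, hsym' j i]
end

section
/- Let (Γ,E) be a generalised Cartan lattice with complete exceptional sequence E = (e_1,…,e_n). Then an element a = Σ_i α_i e_i is a pseudo-real root if and only if ⟨a,a⟩ > 0 and ⟨a,a⟩ divides α_i⟨e_i,e_i⟩ for all i. In particular, if ⟨e_i,e_i⟩ = 1 for all i, then a is a pseudo-real root if and only if ⟨a,a⟩ = 1. -/
/-!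
Write `a = ∑ αᵢ eᵢ`. Since each `eᵢ` is pseudo-real, `⟨eᵢ,eᵢ⟩` divides every `⟨eᵢ,x⟩` and
`⟨x,eᵢ⟩`, so the conditions `⟨a,a⟩ ∣ αᵢ⟨eᵢ,eᵢ⟩` already force `⟨a,a⟩ ∣ ⟨a,x⟩, ⟨x,a⟩`.
Conversely, the Gram matrix of `E` is upper triangular, so `⟨eᵢ,a⟩ = αᵢ⟨eᵢ,eᵢ⟩ + ∑_{j>i} αⱼ⟨eᵢ,eⱼ⟩`,
and downward induction on `i` peels off `⟨a,a⟩ ∣ αᵢ⟨eᵢ,eᵢ⟩` one index at a time.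
When all `⟨eᵢ,eᵢ⟩ = 1` this makes `d = ⟨a,a⟩` divide every coefficient, so `a = d • b` and
`d = d² ⟨b,b⟩`, forcing `d = 1`.
-/

section PseudoReal

variable {Γ : Type} [AddCommGroup Γ] (B : Γ →ₗ[ℤ] Γ →ₗ[ℤ] ℤ)

theorem dvd_apply_sum_left {ι : Type*} [Fintype ι] {e : ι → Γ}
    (hroot : ∀ i, IsPseudoReal B (e i)) {α : ι → ℤ} {d : ℤ}
    (hd : ∀ i, d ∣ α i * B (e i) (e i)) (x : Γ) : d ∣ B (∑ i, α i • e i) x := by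
  simp only [map_sum, map_zsmul, LinearMap.sum_apply, LinearMap.smul_apply, smul_eq_mul]
  refine Finset.dvd_sum fun i _ => ?_
  obtain ⟨k, hk⟩ := ((hroot i).2 x).1
  rw [hk, ← mul_assoc]
  exact (hd i).mul_right k

theorem dvd_apply_sum_right {ι : Type*} [Fintype ι] {e : ι → Γ}
    (hroot : ∀ i, IsPseudoReal B (e i)) {α : ι → ℤ} {d : ℤ}
    (hd : ∀ i, d ∣ α i * B (e i) (e i)) (x : Γ) : d ∣ B x (∑ i, α i • e i) := by
  simp only [map_sum, map_zsmul, smul_eq_mul]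
  refine Finset.dvd_sum fun i _ => ?_
  obtain ⟨k, hk⟩ := ((hroot i).2 x).2
  rw [hk, ← mul_assoc]
  exact (hd i).mul_right k

theorem isPseudoReal_sum_of_dvd {ι : Type*} [Fintype ι] {e : ι → Γ}
    (hroot : ∀ i, IsPseudoReal B (e i)) {α : ι → ℤ}
    (hpos : 0 < B (∑ i, α i • e i) (∑ i, α i • e i))
    (hd : ∀ i, B (∑ i, α i • e i) (∑ i, α i • e i) ∣ α i * B (e i) (e i)) :
    IsPseudoReal B (∑ i, α i • e i) :=
  ⟨hpos, fun x => ⟨dvd_apply_sum_left B hroot hd x, dvd_apply_sum_right B hroot hd x⟩⟩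

theorem dvd_coeff_mul_apply_self_of_dvd_apply {ι : Type*} [Fintype ι] [LinearOrder ι]
    [WellFoundedGT ι] {e : ι → Γ} (hroot : ∀ i, IsPseudoReal B (e i))
    (hexc : ∀ i j, j < i → B (e i) (e j) = 0) {α : ι → ℤ} {d : ℤ}
    (hd : ∀ i, d ∣ B (e i) (∑ j, α j • e j)) (i : ι) : d ∣ α i * B (e i) (e i) := by
  induction i using WellFoundedGT.induction with
  | _ i ih =>
    have hexpand : B (e i) (∑ j, α j • e j) =
        α i * B (e i) (e i) + ∑ j ∈ Finset.univ.erase i, α j * B (e i) (e j) := by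
      simp only [map_sum, map_zsmul, smul_eq_mul]
      exact (Finset.add_sum_erase _ _ (Finset.mem_univ i)).symm
    have hrest : d ∣ ∑ j ∈ Finset.univ.erase i, α j * B (e i) (e j) := by
      refine Finset.dvd_sum fun j hj => ?_
      rcases lt_or_gt_of_ne (Finset.ne_of_mem_erase hj) with hji | hij
      · rw [hexc i j hji, mul_zero]
        exact dvd_zero d
      · obtain ⟨k, hk⟩ := ((hroot j).2 (e i)).2
        rw [hk, ← mul_assoc]
        exact (ih j hij).mul_right k
    exact (dvd_add_left hrest).mp (hexpand ▸ hd i)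

theorem apply_self_eq_one_of_dvd_coeff {ι : Type*} [Fintype ι] (e : ι → Γ) {α : ι → ℤ}
    (hpos : 0 < B (∑ i, α i • e i) (∑ i, α i • e i))
    (hd : ∀ i, B (∑ i, α i • e i) (∑ i, α i • e i) ∣ α i) :
    B (∑ i, α i • e i) (∑ i, α i • e i) = 1 := by
  set d := B (∑ i, α i • e i) (∑ i, α i • e i) with hd_def
  choose β hβ using hd
  set b := ∑ i, β i • e i
  have hsum : ∑ i, α i • e i = d • b := by
    simp only [b, hβ, mul_smul, Finset.smul_sum]
  have hself : d * 1 = d * (d * B b b) := by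
    conv_lhs => rw [mul_one, hd_def, hsum]
    simp only [map_zsmul, LinearMap.smul_apply, smul_eq_mul]
  exact Int.eq_one_of_dvd_one hpos.le ⟨_, mul_left_cancel₀ hpos.ne' hself⟩

end PseudoReal

theorem statement11_general (Γ : Type) [AddCommGroup Γ]
    (B : Γ →ₗ[ℤ] Γ →ₗ[ℤ] ℤ)
    (n : ℕ) (e : Fin n → Γ)
    (hroot : ∀ i, IsPseudoReal B (e i))
    (hexc : ∀ i j : Fin n, j < i → B (e i) (e j) = 0)
    (α : Fin n → ℤ) (a : Γ) (ha : a = ∑ i, α i • e i) :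
    (IsPseudoReal B a ↔ 0 < B a a ∧ ∀ i, B a a ∣ α i * B (e i) (e i)) ∧
    ((∀ i, B (e i) (e i) = 1) → (IsPseudoReal B a ↔ B a a = 1)) := by
  have hiff : IsPseudoReal B a ↔ 0 < B a a ∧ ∀ i, B a a ∣ α i * B (e i) (e i) := by
    subst ha
    exact ⟨fun h => ⟨h.1, dvd_coeff_mul_apply_self_of_dvd_apply B hroot hexc
      fun i => (h.2 (e i)).2⟩, fun h => isPseudoReal_sum_of_dvd B hroot h.1 h.2⟩
  refine ⟨hiff, fun hone => ⟨fun h => ?_, fun h1 => hiff.2 ⟨h1 ▸ one_pos, fun _ => h1 ▸ one_dvd _⟩⟩⟩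
  obtain ⟨hpos, hd⟩ := hiff.1 h
  subst ha
  exact apply_self_eq_one_of_dvd_coeff B e hpos fun i => by simpa only [hone i, mul_one] using hd i

theorem statement11 (Γ : Type) [AddCommGroup Γ] [Module.Free ℤ Γ] [Module.Finite ℤ Γ]
    (B : Γ →ₗ[ℤ] Γ →ₗ[ℤ] ℤ) (hB : Nondeg B)
    (n : ℕ) (e : Fin n → Γ)
    (hroot : ∀ i, IsPseudoReal B (e i))
    (hexc : ∀ i j : Fin n, j < i → B (e i) (e j) = 0)
    (horth : ∀ i j : Fin n, i ≠ j → B (e i) (e j) ≤ 0)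
    (hcomplete : Submodule.span ℤ (Set.range e) = ⊤)
    (α : Fin n → ℤ) (a : Γ) (ha : a = ∑ i, α i • e i) :
    (IsPseudoReal B a ↔ 0 < B a a ∧ ∀ i, B a a ∣ α i * B (e i) (e i)) ∧
    ((∀ i, B (e i) (e i) = 1) → (IsPseudoReal B a ↔ B a a = 1)) :=
  statement11_general Γ B n e hroot hexc α a ha
end

section
/- In a rank-two generalised Cartan lattice with E = (e,f), every pseudo-real root is either a non-negative or non-positive integer combination of e and f. That is, if x = me − nf is a pseudo-real root where m and n are integers of the same sign (both ≥ 0 or both ≤ 0) and not both zero, then a contradiction arises; equivalently, writing x = αe + βf, the coefficients α, β cannot have strictly opposite signs. -/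
/-!
For `x = α • e + β • f` with `α > 0 > β`, orthogonality `⟨f, e⟩ = 0` gives `⟨x, e⟩ = α⟨e, e⟩ > 0`,
so `⟨x, x⟩ ∣ ⟨x, e⟩` forces `⟨x, x⟩ ≤ α⟨e, e⟩`. But
`⟨x, x⟩ = α²⟨e, e⟩ + αβ⟨e, f⟩ + β²⟨f, f⟩`, where the middle term is `≥ 0` because `⟨e, f⟩ ≤ 0`,
so `⟨x, x⟩ > α²⟨e, e⟩ ≥ α⟨e, e⟩`. The opposite sign pattern follows by passing to `-x`.
-/

section PseudoReal

variable {Γ : Type} [AddCommGroup Γ] {B : Γ →ₗ[ℤ] Γ →ₗ[ℤ] ℤ}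

theorem IsPseudoReal.neg {a : Γ} (ha : IsPseudoReal B a) : IsPseudoReal B (-a) := by
  obtain ⟨hpos, hdvd⟩ := ha
  simp only [IsPseudoReal, map_neg, LinearMap.neg_apply, neg_neg, dvd_neg]
  exact ⟨hpos, hdvd⟩

theorem IsPseudoReal.le_apply_of_pos {a : Γ} (ha : IsPseudoReal B a) {x : Γ}
    (hx : 0 < B a x) : B a a ≤ B a x :=
  Int.le_of_dvd hx (ha.2 x).1

end PseudoReal

section OrthogonalPair

variable {Γ : Type} [AddCommGroup Γ] {B : Γ →ₗ[ℤ] Γ →ₗ[ℤ] ℤ} {e f : Γ}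

theorem apply_smul_add_smul_left_of_orthogonal (hfe : B f e = 0) (α β : ℤ) :
    B (α • e + β • f) e = α * B e e := by
  simp [hfe]

theorem apply_smul_add_smul_self_of_orthogonal (hfe : B f e = 0) (α β : ℤ) :
    B (α • e + β • f) (α • e + β • f) = α * α * B e e + α * β * B e f + β * β * B f f := by
  simp only [map_add, map_smul, LinearMap.add_apply, LinearMap.smul_apply, hfe, smul_eq_mul]
  ring

theorem not_pos_and_neg_of_isPseudoReal (hee : 0 < B e e) (hff : 0 < B f f)
    (hfe : B f e = 0) (hef : B e f ≤ 0) {α β : ℤ} (hx : IsPseudoReal B (α • e + β • f)) :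
    ¬(0 < α ∧ β < 0) := by
  rintro ⟨hα, hβ⟩
  have hle : B (α • e + β • f) (α • e + β • f) ≤ α * B e e := by
    rw [← apply_smul_add_smul_left_of_orthogonal hfe α β]
    exact hx.le_apply_of_pos
      (by rw [apply_smul_add_smul_left_of_orthogonal hfe]; positivity)
  rw [apply_smul_add_smul_self_of_orthogonal hfe] at hle
  have hcross : 0 ≤ α * β * B e f :=
    mul_nonneg_of_nonpos_of_nonpos (mul_neg_of_pos_of_neg hα hβ).le hef
  have hsq : α * B e e ≤ α * α * B e e :=
    mul_le_mul_of_nonneg_right (le_mul_of_one_le_left hα.le (by omega)) hee.le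
  linarith [mul_pos (mul_pos_of_neg_of_neg hβ hβ) hff]

end OrthogonalPair

theorem statement12_general (Γ : Type) [AddCommGroup Γ]
    (B : Γ →ₗ[ℤ] Γ →ₗ[ℤ] ℤ)
    (e f : Γ) (he : IsPseudoReal B e) (hf : IsPseudoReal B f)
    (hpair : B f e = 0) (hoff : B e f ≤ 0) :
    ∀ α β : ℤ, IsPseudoReal B (α • e + β • f) →
      ¬(0 < α ∧ β < 0) ∧ ¬(α < 0 ∧ 0 < β) := by
  intro α β hx
  refine ⟨not_pos_and_neg_of_isPseudoReal he.1 hf.1 hpair hoff hx, ?_⟩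
  rintro ⟨hα, hβ⟩
  have hx' : IsPseudoReal B ((-α) • e + (-β) • f) := by
    simpa only [neg_smul, neg_add] using hx.neg
  exact not_pos_and_neg_of_isPseudoReal he.1 hf.1 hpair hoff hx'
    ⟨neg_pos.2 hα, neg_lt_zero.2 hβ⟩

/-- In a rank-two generalised Cartan lattice with basis `(e, f)`, the coefficients of a
pseudo-real root `x = α•e + β•f` cannot have strictly opposite signs. -/
theorem statement12 (Γ : Type) [AddCommGroup Γ] [Module.Free ℤ Γ] [Module.Finite ℤ Γ]
    (B : Γ →ₗ[ℤ] Γ →ₗ[ℤ] ℤ) (hB : Nondeg B)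
    (e f : Γ) (he : IsPseudoReal B e) (hf : IsPseudoReal B f)
    (hpair : B f e = 0) (hoff : B e f ≤ 0)
    (hindep : LinearIndependent ℤ ![e, f])
    (hcomplete : Submodule.span ℤ {e, f} = ⊤) :
    ∀ α β : ℤ, IsPseudoReal B (α • e + β • f) →
      ¬(0 < α ∧ β < 0) ∧ ¬(α < 0 ∧ 0 < β) :=
  statement12_general Γ B e f he hf hpair hoff
end

section
/- Let W be a finite reflection group acting on a Euclidean space V (real vector space with a positive definite symmetric bilinear form). For any w ∈ W written as a product of reflections w = s_{a_1}⋯s_{a_r} in roots a_1,…,a_r, one has Im(id − w) ⊆ Span(a_1,…,a_r); moreover if the a_i are linearly independent then dim Im(id − w) = r. -/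
/-!
Each reflection moves a vector by a multiple of its root, so `x - w x` telescopes into a
combination of the roots. For independent roots, a fixed vector of `w` must be orthogonal to all
of them: peeling off the first reflection, the displacement it causes is a multiple of `a₀` that
also lies in the span of the remaining roots, hence vanishes. So `ker (id - w) ⊆ Kᗮ` for
`K = span {aᵢ}`, and rank–nullity forces the inclusion `range (id - w) ⊆ K` to be an equality.
-/

open scoped RealInnerProductSpace

/-- The reflection in a root `a`: `s_a(x) = x - 2(⟪x,a⟫/⟪a,a⟫) • a`. -/
noncomputable def sR {V : Type} [NormedAddCommGroup V] [InnerProductSpace ℝ V]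
    (a x : V) : V :=
  x - (2 * ⟪x, a⟫ / ⟪a, a⟫) • a

open Module Submodule

section Reflection

variable {V : Type} [NormedAddCommGroup V] [InnerProductSpace ℝ V]

lemma sub_sR (a x : V) : x - sR a x = (2 * ⟪x, a⟫ / ⟪a, a⟫) • a :=
  sub_sub_cancel _ _

lemma sR_of_inner_eq_zero {a x : V} (h : ⟪x, a⟫ = 0) : sR a x = x := by
  simp [sR, h]

lemma sR_sR {a : V} (ha : a ≠ 0) (x : V) : sR a (sR a x) = x := by
  have haa : ⟪a, a⟫ ≠ 0 := inner_self_ne_zero.mpr ha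
  simp only [sR, inner_sub_left, real_inner_smul_left]
  match_scalars
  · ring
  · field_simp
    ring

noncomputable def sRLinear (a : V) : V →ₗ[ℝ] V where
  toFun := sR a
  map_add' x y := by
    simp only [sR, inner_add_left]
    match_scalars <;> ring
  map_smul' c x := by
    simp only [sR, real_inner_smul_left, RingHom.id_apply]
    match_scalars <;> ring

lemma foldr_sR_eq_prod (l : List V) (x : V) : l.foldr sR x = (l.map sRLinear).prod x := by
  induction l with
  | nil => rfl
  | cons b t ih => simp [ih, sRLinear]

lemma sub_foldr_sR_mem_span {r : ℕ} (a : Fin r → V) (x : V) :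
    x - (List.ofFn a).foldr sR x ∈ span ℝ (Set.range a) := by
  induction r with
  | zero => simp
  | succ r ih =>
    have htail : span ℝ (Set.range fun i : Fin r => a i.succ) ≤ span ℝ (Set.range a) :=
      span_mono (Set.range_comp_subset_range _ _)
    rw [List.ofFn_succ, List.foldr_cons, ← sub_add_sub_cancel _ ((List.ofFn _).foldr sR x),
      sub_sR]
    exact add_mem (htail (ih _)) (smul_mem _ _ (subset_span ⟨0, rfl⟩))

lemma inner_eq_zero_of_foldr_sR_eq_self :
    ∀ {r : ℕ} {a : Fin r → V}, LinearIndependent ℝ a →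
      ∀ {x : V}, (List.ofFn a).foldr sR x = x → ∀ i, ⟪x, a i⟫ = 0
  | 0, _, _, _, _ => fun i => i.elim0
  | r + 1, a, hli, x, hx => by
    have ha₀ : a 0 ≠ 0 := hli.ne_zero 0
    rw [← Fin.cons_self_tail a, linearIndependent_finCons] at hli
    obtain ⟨hli_tail, ha₀_notMem⟩ := hli
    rw [List.ofFn_succ, List.foldr_cons] at hx
    set y := (List.ofFn fun i => a i.succ).foldr sR x
    have hy : y = sR (a 0) x := by rw [← hx, sR_sR ha₀]
    have hcoeff : 2 * ⟪x, a 0⟫ / ⟪a 0, a 0⟫ = 0 := by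
      by_contra hc
      refine ha₀_notMem ((smul_mem_iff _ hc).1 ?_)
      rw [← sub_sR, ← hy]
      exact sub_foldr_sR_mem_span _ x
    have h₀ : ⟪x, a 0⟫ = 0 := by
      simpa [ha₀] using hcoeff
    have hfix : y = x := by rw [hy, sR_of_inner_eq_zero h₀]
    exact Fin.cases h₀ (inner_eq_zero_of_foldr_sR_eq_self hli_tail hfix)

end Reflection

lemma LinearMap.range_eq_of_le_of_ker_le_orthogonal {V : Type} [NormedAddCommGroup V]
    [InnerProductSpace ℝ V] [FiniteDimensional ℝ V] {T : V →ₗ[ℝ] V} {K : Submodule ℝ V}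
    (hrange : range T ≤ K) (hker : ker T ≤ Kᗮ) : range T = K := by
  refine eq_of_le_of_finrank_le hrange ?_
  have := T.finrank_range_add_finrank_ker
  have := K.finrank_add_finrank_orthogonal
  have := finrank_mono hker
  omega

theorem statement13_general (V : Type) [NormedAddCommGroup V] [InnerProductSpace ℝ V]
    [FiniteDimensional ℝ V]
    (r : ℕ) (a : Fin r → V)
    (w : V → V) (hw : w = fun x => (List.ofFn a).foldr sR x) :
    (∀ x : V, x - w x ∈ Submodule.span ℝ (Set.range a)) ∧
    (LinearIndependent ℝ a →
      Module.finrank ℝ (Submodule.span ℝ (Set.range (fun x => x - w x))) = r) := by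
  subst hw
  refine ⟨sub_foldr_sR_mem_span a, fun hli => ?_⟩
  set T : V →ₗ[ℝ] V := LinearMap.id - ((List.ofFn a).map sRLinear).prod
  have hT : (fun x => x - (List.ofFn a).foldr sR x) = T := by
    funext x
    simp [T, foldr_sR_eq_prod]
  have hrange : LinearMap.range T ≤ span ℝ (Set.range a) := by
    rintro _ ⟨x, rfl⟩
    rw [← hT]
    exact sub_foldr_sR_mem_span a x
  have hker : LinearMap.ker T ≤ (span ℝ (Set.range a))ᗮ := by
    intro x hx
    have hfix : (List.ofFn a).foldr sR x = x := (sub_eq_zero.1 (congrFun hT x ▸ hx)).symm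
    rw [← span_singleton_le_iff_mem, ← isOrtho_iff_le, isOrtho_span]
    rintro u rfl _ ⟨i, rfl⟩
    exact inner_eq_zero_of_foldr_sR_eq_self hli hfix i
  rw [hT, ← LinearMap.coe_range, span_eq, LinearMap.range_eq_of_le_of_ker_le_orthogonal hrange hker,
    finrank_span_eq_card hli, Fintype.card_fin]

theorem statement13 (V : Type) [NormedAddCommGroup V] [InnerProductSpace ℝ V]
    [FiniteDimensional ℝ V]
    (r : ℕ) (a : Fin r → V) (ha : ∀ i, a i ≠ 0)
    (w : V → V) (hw : w = fun x => (List.ofFn a).foldr sR x) :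
    (∀ x : V, x - w x ∈ Submodule.span ℝ (Set.range a)) ∧
    (LinearIndependent ℝ a →
      Module.finrank ℝ (Submodule.span ℝ (Set.range (fun x => x - w x))) = r) :=
  statement13_general V r a w hw
end

section
/- Carter's Lemma: let (W,S) be a finite Coxeter group realized as a reflection group on a Euclidean space V. Then for every w ∈ W, the absolute length ℓ(w) (the minimal number of reflections whose product is w) equals dim Im(id − w). Moreover, an expression w = s_{a_1}⋯s_{a_r} as a product of reflections is reduced (r = ℓ(w)) if and only if the roots a_1,…,a_r are linearly independent. -/
open scoped RealInnerProductSpace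

/-- A linear automorphism is a reflection if it is given by `s_a` for some nonzero root `a`. -/
def IsReflAuto {V : Type} [NormedAddCommGroup V] [InnerProductSpace ℝ V]
    (g : V ≃ₗ[ℝ] V) : Prop :=
  ∃ a : V, a ≠ 0 ∧ ∀ x, g x = sR a x

/-- The absolute length of `w` relative to the reflections lying in the group `G`:
the minimal number of reflections of `G` whose product is `w`. -/
noncomputable def absLen {V : Type} [NormedAddCommGroup V] [InnerProductSpace ℝ V]
    (G : Subgroup (V ≃ₗ[ℝ] V)) (w : V ≃ₗ[ℝ] V) : ℕ :=
  sInf {r : ℕ | ∃ l : List (V ≃ₗ[ℝ] V),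
    l.length = r ∧ (∀ t ∈ l, t ∈ G ∧ IsReflAuto t) ∧ l.prod = w}

/-!
A product of reflections in roots `a₁, …, aᵣ` moves every vector by an element of `span (aᵢ)`,
so `rank (1 - w) ≤ ℓ(w)`. Conversely, if `w ≠ 1` then some root `a` lies in
`Im (1 - w) = Ker (1 - w)ᗮ`: otherwise a generic vector of the fixed space `Ker (1 - w)` lies on
no reflecting hyperplane, and an element of the group fixing such a regular vector is trivial
(shown with a simple system and the deletion condition). For such a root, `s_a w` fixes
`Ker (1 - w)` and also a preimage of `a`, so `rank (1 - s_a w) < rank (1 - w)`, and induction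
gives `ℓ(w) ≤ rank (1 - w)`. Finally `Im (1 - w) ⊆ span (aᵢ)` has dimension `r` exactly when
the `aᵢ` are independent: then a vector fixed by `s_{a₁} ⋯ s_{aᵣ}` is orthogonal to every `aᵢ`.
-/

open Module Submodule
open LinearMap (ker range)

namespace ReflectionGroup

variable {V : Type} [NormedAddCommGroup V] [InnerProductSpace ℝ V]

noncomputable def rootReflection (a : V) : V ≃ₗ[ℝ] V :=
  (ℝ ∙ a)ᗮ.reflection.toLinearEquiv

theorem rootReflection_apply (a x : V) : rootReflection a x = sR a x := by
  simp only [rootReflection, LinearIsometryEquiv.coe_toLinearEquiv, reflection_orthogonal_apply,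
    reflection_singleton_apply, sR, real_inner_self_eq_norm_sq, real_inner_comm x a,
    RCLike.ofReal_real_eq_id, id]
  module

theorem rootReflection_apply_of_norm_eq_one {a : V} (ha : ‖a‖ = 1) (x : V) :
    rootReflection a x = x - (2 * ⟪x, a⟫) • a := by
  rw [rootReflection_apply, sR, real_inner_self_eq_norm_sq, ha, one_pow, div_one]

@[simp]
theorem rootReflection_rootReflection (a x : V) : rootReflection a (rootReflection a x) = x :=
  reflection_reflection _ x

@[simp]
theorem rootReflection_mul_self (a : V) : rootReflection a * rootReflection a = 1 :=
  LinearEquiv.ext (rootReflection_rootReflection a)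

@[simp]
theorem rootReflection_mul_self_mul (a : V) (g : V ≃ₗ[ℝ] V) :
    rootReflection a * (rootReflection a * g) = g := by
  rw [← mul_assoc, rootReflection_mul_self, one_mul]

@[simp]
theorem rootReflection_inv (a : V) : (rootReflection a)⁻¹ = rootReflection a :=
  inv_eq_of_mul_eq_one_right (rootReflection_mul_self a)

theorem rootReflection_self (a : V) : rootReflection a a = -a :=
  reflection_orthogonalComplement_singleton_eq_neg a

theorem rootReflection_apply_eq_self_iff {a x : V} : rootReflection a x = x ↔ ⟪a, x⟫ = 0 :=
  (reflection_eq_self_iff x).trans mem_orthogonal_singleton_iff_inner_right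

theorem rootReflection_smul {c : ℝ} (hc : c ≠ 0) (a : V) :
    rootReflection (c • a) = rootReflection a := by
  simp only [rootReflection, span_singleton_smul_eq hc.isUnit]

theorem rootReflection_neg (a : V) : rootReflection (-a) = rootReflection a := by
  rw [← neg_one_smul ℝ a, rootReflection_smul (by norm_num)]

theorem sub_rootReflection_mem_span (a x : V) : x - rootReflection a x ∈ ℝ ∙ a := by
  rw [rootReflection_apply, sR, sub_sub_cancel]
  exact smul_mem _ _ (mem_span_singleton_self a)

theorem isReflAuto_iff {t : V ≃ₗ[ℝ] V} :
    IsReflAuto t ↔ ∃ a, a ≠ 0 ∧ t = rootReflection a := by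
  simp only [IsReflAuto, LinearEquiv.ext_iff, rootReflection_apply]

variable (V) in
def orthogonalGroup : Subgroup (V ≃ₗ[ℝ] V) where
  carrier := {g | ∀ x y, ⟪g x, g y⟫ = ⟪x, y⟫}
  mul_mem' {g h} hg hh x y := (hg _ _).trans (hh x y)
  one_mem' _ _ := rfl
  inv_mem' {g} hg x y := by simpa using (hg (g⁻¹ x) (g⁻¹ y)).symm

theorem rootReflection_mem_orthogonalGroup (a : V) : rootReflection a ∈ orthogonalGroup V :=
  LinearIsometryEquiv.inner_map_map _

theorem le_orthogonalGroup {G : Subgroup (V ≃ₗ[ℝ] V)}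
    (hgen : Subgroup.closure {t | t ∈ G ∧ IsReflAuto t} = G) : G ≤ orthogonalGroup V := by
  rw [← hgen, Subgroup.closure_le]
  rintro t ⟨-, ht⟩
  obtain ⟨a, -, rfl⟩ := isReflAuto_iff.1 ht
  exact rootReflection_mem_orthogonalGroup a

theorem norm_apply_of_mem_orthogonalGroup {g : V ≃ₗ[ℝ] V} (hg : g ∈ orthogonalGroup V)
    (x : V) : ‖g x‖ = ‖x‖ := by
  rw [norm_eq_sqrt_real_inner, norm_eq_sqrt_real_inner, hg]

theorem rootReflection_map {g : V ≃ₗ[ℝ] V} (hg : g ∈ orthogonalGroup V) (a : V) :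
    rootReflection (g a) = g * rootReflection a * g⁻¹ := by
  ext x
  obtain ⟨y, rfl⟩ := g.surjective x
  simp [rootReflection_apply, sR, hg _ _, norm_apply_of_mem_orthogonalGroup hg]

theorem mem_ker_id_sub {g : V ≃ₗ[ℝ] V} {x : V} :
    x ∈ ker (LinearMap.id - (g : V →ₗ[ℝ] V)) ↔ g x = x := by
  rw [LinearMap.mem_ker, LinearMap.sub_apply, LinearMap.id_apply, LinearEquiv.coe_coe, sub_eq_zero,
    eq_comm]

theorem inner_eq_zero_of_mem_range_of_mem_ker {g : V ≃ₗ[ℝ] V} (hg : g ∈ orthogonalGroup V)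
    {u v : V} (hu : u ∈ range (LinearMap.id - (g : V →ₗ[ℝ] V)))
    (hv : v ∈ ker (LinearMap.id - (g : V →ₗ[ℝ] V))) : ⟪u, v⟫ = 0 := by
  obtain ⟨x, rfl⟩ := hu
  rw [mem_ker_id_sub] at hv
  rw [LinearMap.sub_apply, LinearMap.id_apply, inner_sub_left]
  nth_rw 2 [← hv]
  rw [LinearEquiv.coe_coe, hg, sub_self]

theorem range_id_sub_eq_orthogonal_ker [FiniteDimensional ℝ V] {g : V ≃ₗ[ℝ] V}
    (hg : g ∈ orthogonalGroup V) :
    range (LinearMap.id - (g : V →ₗ[ℝ] V)) =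
      (ker (LinearMap.id - (g : V →ₗ[ℝ] V)))ᗮ := by
  refine eq_of_le_of_finrank_eq (fun u hu => (mem_orthogonal' _ _).2 fun v hv =>
    inner_eq_zero_of_mem_range_of_mem_ker hg hu hv) ?_
  have := LinearMap.finrank_range_add_finrank_ker (LinearMap.id - (g : V →ₗ[ℝ] V))
  have := (ker (LinearMap.id - (g : V →ₗ[ℝ] V))).finrank_add_finrank_orthogonal
  omega

theorem finrank_range_id_sub_rootReflection_mul_lt [FiniteDimensional ℝ V] {w : V ≃ₗ[ℝ] V}
    (hw : w ∈ orthogonalGroup V) {a : V} (ha : a ∈ range (LinearMap.id - (w : V →ₗ[ℝ] V)))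
    (ha0 : a ≠ 0) :
    finrank ℝ (range (LinearMap.id - ((rootReflection a * w : V ≃ₗ[ℝ] V) : V →ₗ[ℝ] V))) <
      finrank ℝ (range (LinearMap.id - (w : V →ₗ[ℝ] V))) := by
  obtain ⟨y, hy⟩ := ha
  have hy' : y - w y = a := hy
  have hker : ker (LinearMap.id - (w : V →ₗ[ℝ] V)) <
      ker (LinearMap.id - ((rootReflection a * w : V ≃ₗ[ℝ] V) : V →ₗ[ℝ] V)) := by
    refine lt_of_le_of_ne (fun x hx => ?_) fun heq => ?_
    · have hax := inner_eq_zero_of_mem_range_of_mem_ker hw ⟨y, hy⟩ hx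
      rw [mem_ker_id_sub] at hx ⊢
      rw [LinearEquiv.mul_apply, hx, rootReflection_apply_eq_self_iff.2 hax]
    · -- `rootReflection a` swaps `y` and `w y`, which have the same norm
      have hry : rootReflection a y = w y := by
        rw [← hy']
        exact reflection_sub (norm_apply_of_mem_orthogonalGroup hw y).symm
      have : y ∈ ker (LinearMap.id - (w : V →ₗ[ℝ] V)) := by
        rw [heq, mem_ker_id_sub, LinearEquiv.mul_apply, ← hry, rootReflection_rootReflection]
      rw [mem_ker_id_sub] at this
      exact ha0 (by rw [← hy', this, sub_self])
  have h1 := LinearMap.finrank_range_add_finrank_ker (LinearMap.id - (w : V →ₗ[ℝ] V))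
  have h2 := LinearMap.finrank_range_add_finrank_ker
    (LinearMap.id - ((rootReflection a * w : V ≃ₗ[ℝ] V) : V →ₗ[ℝ] V))
  have h3 := finrank_lt_finrank_of_lt hker
  omega

noncomputable def wordProd (L : List V) : V ≃ₗ[ℝ] V :=
  (L.map rootReflection).prod

@[simp]
theorem wordProd_nil : wordProd ([] : List V) = 1 := rfl

@[simp]
theorem wordProd_cons (a : V) (L : List V) :
    wordProd (a :: L) = rootReflection a * wordProd L := by
  simp [wordProd]

@[simp]
theorem wordProd_append (L M : List V) : wordProd (L ++ M) = wordProd L * wordProd M := by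
  simp [wordProd]

theorem wordProd_concat (L : List V) (a : V) :
    wordProd (L.concat a) = wordProd L * rootReflection a := by
  simp

theorem wordProd_reverse (L : List V) : wordProd L.reverse = (wordProd L)⁻¹ := by
  induction L with
  | nil => simp
  | cons a L ih => simp [ih]

theorem wordProd_apply (L : List V) (x : V) : wordProd L x = L.foldr sR x := by
  induction L with
  | nil => rfl
  | cons a L ih => simp [ih, rootReflection_apply]

theorem wordProd_mem_orthogonalGroup (L : List V) : wordProd L ∈ orthogonalGroup V :=
  (orthogonalGroup V).list_prod_mem (by simpa using fun a _ => rootReflection_mem_orthogonalGroup a)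

theorem sub_wordProd_apply_mem_span (L : List V) (x : V) :
    x - wordProd L x ∈ span ℝ {b | b ∈ L} := by
  induction L generalizing x with
  | nil => simp
  | cons a L ih =>
    have h : x - wordProd (a :: L) x =
        (x - wordProd L x) + (wordProd L x - rootReflection a (wordProd L x)) := by simp
    rw [h]
    exact add_mem (span_mono (fun b hb => List.mem_cons_of_mem a hb) (ih x))
      (span_mono (s := {a}) (by simp) (sub_rootReflection_mem_span a _))

theorem exists_wordProd_eq_prod {l : List (V ≃ₗ[ℝ] V)} (hl : ∀ t ∈ l, IsReflAuto t) :
    ∃ L : List V, L.length = l.length ∧ wordProd L = l.prod := by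
  induction l with
  | nil => exact ⟨[], rfl, rfl⟩
  | cons t l ih =>
    obtain ⟨L, hlen, hL⟩ := ih fun s hs => hl s (List.mem_cons_of_mem t hs)
    obtain ⟨a, -, rfl⟩ := isReflAuto_iff.1 (hl t List.mem_cons_self)
    exact ⟨a :: L, by simp [hlen], by simp [hL]⟩

theorem finrank_range_id_sub_prod_le_length [FiniteDimensional ℝ V] {l : List (V ≃ₗ[ℝ] V)}
    (hl : ∀ t ∈ l, IsReflAuto t) :
    finrank ℝ (range (LinearMap.id - (l.prod : V →ₗ[ℝ] V))) ≤ l.length := by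
  classical
  obtain ⟨L, hlen, hL⟩ := exists_wordProd_eq_prod hl
  have hle : range (LinearMap.id - (l.prod : V →ₗ[ℝ] V)) ≤ span ℝ {b | b ∈ L} := by
    rintro _ ⟨x, rfl⟩
    rw [← hL]
    exact sub_wordProd_apply_mem_span L x
  calc _ ≤ finrank ℝ (span ℝ {b | b ∈ L}) := finrank_mono hle
    _ = finrank ℝ (span ℝ (L.toFinset : Set V)) := by rw [List.coe_toFinset]
    _ ≤ L.toFinset.card := finrank_span_finset_le_card _
    _ ≤ l.length := hlen ▸ L.toFinset_card_le

theorem wordProd_apply_of_forall_inner_eq_zero {L : List V} {x : V}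
    (h : ∀ a ∈ L, ⟪a, x⟫ = 0) : wordProd L x = x := by
  induction L with
  | nil => rfl
  | cons a L ih =>
    rw [wordProd_cons, LinearEquiv.mul_apply, ih fun b hb => h b (List.mem_cons_of_mem a hb),
      rootReflection_apply_eq_self_iff.2 (h a List.mem_cons_self)]

theorem setOf_mem_ofFn {α : Type*} {r : ℕ} (a : Fin r → α) :
    {b | b ∈ List.ofFn a} = Set.range a :=
  Set.ext (List.mem_ofFn' a)

theorem inner_eq_zero_of_wordProd_ofFn_apply_eq_self {r : ℕ} {a : Fin r → V}
    (ha : LinearIndependent ℝ a) {x : V} (hx : wordProd (List.ofFn a) x = x) (i : Fin r) :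
    ⟪a i, x⟫ = 0 := by
  induction r with
  | zero => exact i.elim0
  | succ r ih =>
    rw [← Fin.cons_self_tail a, linearIndependent_finCons] at ha
    set y := wordProd (List.ofFn (Fin.tail a)) x
    have hxy : rootReflection (a 0) y = x := by rw [← hx, List.ofFn_succ, wordProd_cons]; rfl
    -- `x - y` lies on the line through `a 0` and in the span of the other roots, so it vanishes
    have hline : x - y ∈ ℝ ∙ a 0 := by
      rw [← hxy, ← neg_sub]
      exact neg_mem (sub_rootReflection_mem_span _ _)
    have hspan : x - y ∈ span ℝ (Set.range (Fin.tail a)) := by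
      rw [← setOf_mem_ofFn]
      exact sub_wordProd_apply_mem_span _ x
    have hyx : y = x := (sub_eq_zero.1
      (disjoint_def.1 (disjoint_span_singleton.2 fun h => absurd h ha.2) _ hspan hline)).symm
    rw [hyx] at hxy
    exact Fin.cases (rootReflection_apply_eq_self_iff.1 hxy) (ih ha.1 hyx) i

theorem ker_id_sub_wordProd_ofFn {r : ℕ} {a : Fin r → V} (ha : LinearIndependent ℝ a) :
    ker (LinearMap.id - (wordProd (List.ofFn a) : V →ₗ[ℝ] V)) =
      (span ℝ (Set.range a))ᗮ := by
  ext x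
  simp only [mem_ker_id_sub, span_range_eq_iSup, ← iInf_orthogonal, mem_iInf,
    mem_orthogonal_singleton_iff_inner_right]
  refine ⟨inner_eq_zero_of_wordProd_ofFn_apply_eq_self ha, fun h => ?_⟩
  refine wordProd_apply_of_forall_inner_eq_zero fun b hb => ?_
  obtain ⟨i, rfl⟩ := (List.mem_ofFn' a b).1 hb
  exact h i

theorem finrank_range_id_sub_wordProd_ofFn_eq_iff [FiniteDimensional ℝ V] {r : ℕ}
    (a : Fin r → V) :
    finrank ℝ (range (LinearMap.id - (wordProd (List.ofFn a) : V →ₗ[ℝ] V))) = r ↔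
      LinearIndependent ℝ a := by
  constructor
  · intro h
    have hle : range (LinearMap.id - (wordProd (List.ofFn a) : V →ₗ[ℝ] V)) ≤
        span ℝ (Set.range a) := by
      rintro _ ⟨x, rfl⟩
      rw [← setOf_mem_ofFn]
      exact sub_wordProd_apply_mem_span _ x
    have h1 := h ▸ finrank_mono hle
    have h2 := finrank_range_le_card (R := ℝ) a
    rw [Fintype.card_fin] at h2
    rw [linearIndependent_iff_card_eq_finrank_span, Fintype.card_fin]
    exact le_antisymm h1 h2
  · intro ha
    have h1 := LinearMap.finrank_range_add_finrank_ker
      (LinearMap.id - (wordProd (List.ofFn a) : V →ₗ[ℝ] V))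
    have h2 := (span ℝ (Set.range a)).finrank_add_finrank_orthogonal
    rw [ker_id_sub_wordProd_ofFn ha] at h1
    rw [finrank_span_eq_card ha, Fintype.card_fin] at h2
    omega

section Roots

variable {G : Subgroup (V ≃ₗ[ℝ] V)}

-- Roots are normalised to unit length: each reflection of `G` then has exactly two, `±a`.
variable (G) in
def roots : Set V := {a | ‖a‖ = 1 ∧ rootReflection a ∈ G}

theorem ne_zero_of_mem_roots {a : V} (ha : a ∈ roots G) : a ≠ 0 := by
  rintro rfl
  simpa using ha.1

theorem neg_mem_roots {a : V} (ha : a ∈ roots G) : -a ∈ roots G :=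
  ⟨by rw [norm_neg, ha.1], by rw [rootReflection_neg]; exact ha.2⟩

theorem apply_mem_roots {g : V ≃ₗ[ℝ] V} (hgG : g ∈ G) (hg : g ∈ orthogonalGroup V) {a : V}
    (ha : a ∈ roots G) : g a ∈ roots G :=
  ⟨by rw [norm_apply_of_mem_orthogonalGroup hg, ha.1],
    by rw [rootReflection_map hg]; exact mul_mem (mul_mem hgG ha.2) (inv_mem hgG)⟩

theorem exists_mem_roots_eq_rootReflection {t : V ≃ₗ[ℝ] V} (htG : t ∈ G)
    (ht : IsReflAuto t) : ∃ a ∈ roots G, t = rootReflection a := by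
  obtain ⟨b, hb, rfl⟩ := isReflAuto_iff.1 ht
  have hc : ‖b‖⁻¹ ≠ 0 := inv_ne_zero (norm_ne_zero_iff.2 hb)
  exact ⟨‖b‖⁻¹ • b, ⟨norm_smul_inv_norm hb, by rwa [rootReflection_smul hc]⟩,
    (rootReflection_smul hc b).symm⟩

theorem eq_or_eq_neg_of_eq_smul {a b : V} {c : ℝ} (ha : ‖a‖ = 1) (hb : ‖b‖ = 1)
    (h : a = c • b) : a = b ∨ a = -b := by
  have : |c| = 1 := by simpa [h, norm_smul, hb] using ha
  rcases (abs_eq zero_le_one).1 this with rfl | rfl <;> simp [h]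

theorem eq_or_eq_neg_of_rootReflection_eq {a b : V} (ha : ‖a‖ = 1) (hb : ‖b‖ = 1)
    (h : rootReflection a = rootReflection b) : a = b ∨ a = -b := by
  refine eq_or_eq_neg_of_eq_smul ha hb (c := ⟪a, b⟫) ?_
  have := congrArg (· a) h
  simp only [rootReflection_self, rootReflection_apply_of_norm_eq_one hb] at this
  linear_combination (norm := module) (-1 / 2 : ℝ) • this

theorem roots_finite [Finite G] : (roots G).Finite := by
  have hfiber (g : V ≃ₗ[ℝ] V) : {a : V | ‖a‖ = 1 ∧ rootReflection a = g}.Finite := by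
    rcases Set.eq_empty_or_nonempty {a : V | ‖a‖ = 1 ∧ rootReflection a = g} with
      h | ⟨b, hb, rfl⟩
    · simp [h]
    · exact (Set.toFinite {b, -b}).subset fun a ⟨ha, h⟩ =>
        eq_or_eq_neg_of_rootReflection_eq ha hb h
  exact ((Set.toFinite (G : Set (V ≃ₗ[ℝ] V))).biUnion fun g _ => hfiber g).subset
    fun a ha => Set.mem_biUnion ha.2 ⟨ha.1, rfl⟩

variable (G) in
def IsRegular (x₀ : V) : Prop := ∀ a ∈ roots G, ⟪a, x₀⟫ ≠ 0

variable (G) in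
def positiveRoots (x₀ : V) : Set V := {a | a ∈ roots G ∧ 0 < ⟪a, x₀⟫}

variable {x₀ : V}

theorem mem_positiveRoots_or_neg (hx₀ : IsRegular G x₀) {a : V} (ha : a ∈ roots G) :
    a ∈ positiveRoots G x₀ ∨ -a ∈ positiveRoots G x₀ := by
  rcases (hx₀ a ha).lt_or_gt with h | h
  · exact Or.inr ⟨neg_mem_roots ha, by rw [inner_neg_left]; linarith⟩
  · exact Or.inl ⟨ha, h⟩

theorem eq_of_mem_positiveRoots_of_mem_span {a b : V} (ha : a ∈ positiveRoots G x₀)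
    (hb : b ∈ positiveRoots G x₀) (hab : a ∈ ℝ ∙ b) : a = b := by
  obtain ⟨c, rfl⟩ := mem_span_singleton.1 hab
  refine (eq_or_eq_neg_of_eq_smul ha.1.1 hb.1.1 rfl).resolve_right fun h => ?_
  have := ha.2
  rw [h, inner_neg_left] at this
  linarith [hb.2]

def cone (S : Finset V) : Set V :=
  {x | ∃ c : V → ℝ, (∀ b, 0 ≤ c b) ∧ x = ∑ b ∈ S, c b • b}

theorem mem_cone_of_mem {S : Finset V} {a : V} (ha : a ∈ S) : a ∈ cone S := by
  classical
  exact ⟨fun b => if b = a then 1 else 0, fun b => by positivity, by simp [ite_smul, ha]⟩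

theorem smul_mem_cone {S : Finset V} {t : ℝ} (ht : 0 ≤ t) {x : V} (hx : x ∈ cone S) :
    t • x ∈ cone S := by
  obtain ⟨c, hc, rfl⟩ := hx
  exact ⟨fun b => t * c b, fun b => mul_nonneg ht (hc b), by simp [Finset.smul_sum, smul_smul]⟩

theorem add_mem_cone {S : Finset V} {x y : V} (hx : x ∈ cone S) (hy : y ∈ cone S) :
    x + y ∈ cone S := by
  obtain ⟨c, hc, rfl⟩ := hx
  obtain ⟨d, hd, rfl⟩ := hy
  exact ⟨c + d, fun b => add_nonneg (hc b) (hd b), by simp [add_smul, Finset.sum_add_distrib]⟩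

section SimpleSystem

variable [DecidableEq V]

theorem cone_subset_cone_erase {S : Finset V} {α : V}
    (hα : α ∈ cone (S.erase α)) : cone S ⊆ cone (S.erase α) := by
  rintro _ ⟨c, hc, rfl⟩
  by_cases hαS : α ∈ S
  · rw [← Finset.add_sum_erase S _ hαS]
    exact add_mem_cone (smul_mem_cone (hc α) hα) ⟨c, hc, rfl⟩
  · exact ⟨c, hc, by rw [Finset.erase_eq_of_notMem hαS]⟩

/-- Unlike the textbook notion, `Δ` is not required to be linearly independent: that each
`α ∈ Δ` spans an extreme ray of the cone (`IsSimpleSystem.mem_span_of_eq_add`) is all the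
deletion condition needs. -/
structure IsSimpleSystem (G : Subgroup (V ≃ₗ[ℝ] V)) (x₀ : V) (Δ : Finset V) : Prop where
  subset_positiveRoots : ↑Δ ⊆ positiveRoots G x₀
  mem_cone : ∀ a ∈ positiveRoots G x₀, a ∈ cone Δ
  notMem_cone_erase : ∀ α ∈ Δ, α ∉ cone (Δ.erase α)

variable (G) in
theorem exists_isSimpleSystem [Finite G] (x₀ : V) : ∃ Δ, IsSimpleSystem G x₀ Δ := by
  classical
  have hP : (positiveRoots G x₀).Finite := roots_finite.subset fun a ha => ha.1
  obtain ⟨Δ, hΔ, hmin⟩ := Finset.exists_min_image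
    (hP.toFinset.powerset.filter fun S => ∀ a ∈ positiveRoots G x₀, a ∈ cone S) Finset.card
    ⟨hP.toFinset, by simpa using fun a ha => mem_cone_of_mem (hP.mem_toFinset.2 ha)⟩
  simp only [Finset.mem_filter, Finset.mem_powerset] at hΔ hmin
  refine ⟨Δ, fun a ha => hP.mem_toFinset.1 (hΔ.1 ha), hΔ.2, fun α hα hcone => ?_⟩
  have := hmin (Δ.erase α) ⟨(Δ.erase_subset α).trans hΔ.1,
    fun a ha => cone_subset_cone_erase hcone (hΔ.2 a ha)⟩
  exact (Finset.card_erase_lt_of_mem hα).not_ge this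

namespace IsSimpleSystem

variable {Δ : Finset V}

theorem mem_span_of_eq_add (hΔ : IsSimpleSystem G x₀ Δ) {α u v : V} (hα : α ∈ Δ)
    (hu : u ∈ cone Δ) (hv : v ∈ cone Δ) (h : α = u + v) : u ∈ ℝ ∙ α := by
  obtain ⟨c, hc, rfl⟩ := hu
  obtain ⟨d, hd, rfl⟩ := hv
  have hpos : ∀ b ∈ Δ, 0 < ⟪b, x₀⟫ := fun b hb => (hΔ.subset_positiveRoots hb).2
  set w := ∑ b ∈ Δ.erase α, (c b + d b) • b
  have hw : (1 - (c α + d α)) • α = w := by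
    rw [← Finset.sum_add_distrib, ← Finset.add_sum_erase Δ _ hα] at h
    simp only [← add_smul] at h
    rw [sub_smul, one_smul, sub_eq_iff_eq_add', ← h]
  have hterm : ∀ b ∈ Δ.erase α, 0 ≤ (c b + d b) * ⟪b, x₀⟫ := fun b hb =>
    mul_nonneg (add_nonneg (hc b) (hd b)) (hpos b (Finset.mem_of_mem_erase hb)).le
  have hw_inner : ⟪w, x₀⟫ = ∑ b ∈ Δ.erase α, (c b + d b) * ⟪b, x₀⟫ := by
    simp only [w, sum_inner, real_inner_smul_left]
  rcases (Finset.sum_nonneg hterm).eq_or_lt with h0 | h0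
  · -- all coefficients of `u + v` off `α` vanish, so `u` is a multiple of `α`
    have hc0 : ∀ b ∈ Δ, b ≠ α → c b = 0 := fun b hb hne => by
      have := (Finset.sum_eq_zero_iff_of_nonneg hterm).1 h0.symm b
        (Finset.mem_erase.2 ⟨hne, hb⟩)
      have := (mul_eq_zero.1 this).resolve_right (hpos b hb).ne'
      linarith [hc b, hd b]
    rw [Finset.sum_eq_single_of_mem α hα fun b hb hne => by rw [hc0 b hb hne, zero_smul]]
    exact smul_mem _ _ (mem_span_singleton_self α)
  · have ht : 0 < 1 - (c α + d α) := by
      refine pos_of_mul_pos_left ?_ (hpos α hα).le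
      rw [← real_inner_smul_left, hw, hw_inner]
      exact h0
    have hαw : α = (1 - (c α + d α))⁻¹ • w := by
      rw [← hw, smul_smul, inv_mul_cancel₀ ht.ne', one_smul]
    have := smul_mem_cone (inv_nonneg.2 ht.le)
      (⟨fun b => c b + d b, fun b => add_nonneg (hc b) (hd b), rfl⟩ : w ∈ cone (Δ.erase α))
    rw [← hαw] at this
    exact (hΔ.notMem_cone_erase α hα this).elim

theorem rootReflection_apply_mem_positiveRoots (hΔ : IsSimpleSystem G x₀ Δ)
    (hx₀ : IsRegular G x₀) {α β : V} (hα : α ∈ Δ) (hβ : β ∈ positiveRoots G x₀) (hne : β ≠ α) :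
    rootReflection α β ∈ positiveRoots G x₀ := by
  have hαP := hΔ.subset_positiveRoots hα
  have hγ : rootReflection α β ∈ roots G :=
    apply_mem_roots hαP.1.2 (rootReflection_mem_orthogonalGroup α) hβ.1
  refine (mem_positiveRoots_or_neg hx₀ hγ).resolve_right fun hneg => hne ?_
  set k := 2 * ⟪β, α⟫
  have hγ_eq : rootReflection α β = β - k • α :=
    rootReflection_apply_of_norm_eq_one hαP.1.1 β
  have hk : 0 < k := by
    have := hneg.2
    rw [hγ_eq, inner_neg_left, inner_sub_left, real_inner_smul_left] at this
    nlinarith [hβ.2, hαP.2]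
  -- `k • α = β - s_α β` splits `α` into two elements of the cone
  have hsplit : α = k⁻¹ • β + k⁻¹ • -rootReflection α β := by
    rw [hγ_eq, ← smul_add, neg_sub, add_sub_cancel, smul_smul, inv_mul_cancel₀ hk.ne',
      one_smul]
  have hk' : 0 ≤ k⁻¹ := inv_nonneg.2 hk.le
  have := hΔ.mem_span_of_eq_add hα (smul_mem_cone hk' (hΔ.mem_cone β hβ))
    (smul_mem_cone hk' (hΔ.mem_cone _ hneg)) hsplit
  exact eq_of_mem_positiveRoots_of_mem_span hβ hαP ((smul_mem_iff _ (inv_ne_zero hk.ne')).1 this)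

theorem deletion_condition (hΔ : IsSimpleSystem G x₀ Δ) (hx₀ : IsRegular G x₀) {β : V}
    (hβ : β ∈ Δ) {L : List V} (hL : ∀ δ ∈ L, δ ∈ Δ) :
    wordProd L β ∈ positiveRoots G x₀ ∨ ∃ L' : List V, (∀ δ ∈ L', δ ∈ Δ) ∧
      L'.length + 1 = L.length ∧ wordProd L' = wordProd L * rootReflection β := by
  induction L with
  | nil => exact Or.inl (hΔ.subset_positiveRoots hβ)
  | cons δ M ih =>
    have hδ := hL δ List.mem_cons_self
    have hM : ∀ b ∈ M, b ∈ Δ := fun b hb => hL b (List.mem_cons_of_mem δ hb)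
    rcases ih hM with hpos | ⟨M', hM', hlen, heq⟩
    · by_cases hcancel : wordProd M β = δ
      · refine Or.inr ⟨M, hM, rfl, ?_⟩
        have := rootReflection_map (wordProd_mem_orthogonalGroup M) β
        rw [hcancel] at this
        simp [this, mul_assoc]
      · exact Or.inl (hΔ.rootReflection_apply_mem_positiveRoots hx₀ hδ hpos hcancel)
    · exact Or.inr ⟨δ :: M', List.forall_mem_cons.2 ⟨hδ, hM'⟩, by simp [hlen],
        by simp [heq, mul_assoc]⟩

theorem wordProd_eq_one_of_apply_eq_self (hΔ : IsSimpleSystem G x₀ Δ) (hx₀ : IsRegular G x₀)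
    {L : List V} (hL : ∀ δ ∈ L, δ ∈ Δ) (hfix : wordProd L x₀ = x₀) :
    wordProd L = 1 := by
  obtain ⟨n, hn⟩ : ∃ n, L.length = n := ⟨_, rfl⟩
  induction n using Nat.strong_induction_on generalizing L with
  | _ n ih =>
  rcases L.eq_nil_or_concat with rfl | ⟨M, β, rfl⟩
  · rfl
  have hβ : β ∈ Δ := hL β (by simp)
  have hM : ∀ δ ∈ M, δ ∈ Δ := fun δ hδ => hL δ (by simp [hδ])
  rcases hΔ.deletion_condition hx₀ hβ hM with hpos | ⟨M', hM', hlen, heq⟩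
  · -- a word fixing `x₀` preserves `⟪·, x₀⟫`, but it sends `β` to minus a positive root
    have h1 : ⟪wordProd (M.concat β) β, x₀⟫ = ⟪β, x₀⟫ := by
      conv_lhs => rw [← hfix]
      exact wordProd_mem_orthogonalGroup _ β x₀
    rw [wordProd_concat, LinearEquiv.mul_apply, rootReflection_self, map_neg,
      inner_neg_left] at h1
    linarith [hpos.2, (hΔ.subset_positiveRoots hβ).2]
  · rw [wordProd_concat, ← heq] at hfix ⊢
    exact ih M'.length (by simp at hn; omega) hM' hfix rfl

theorem exists_mem_inner_pos (hΔ : IsSimpleSystem G x₀ Δ) {a : V}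
    (ha : a ∈ positiveRoots G x₀) : ∃ δ ∈ Δ, 0 < ⟪δ, a⟫ := by
  obtain ⟨c, hc, hsum⟩ := hΔ.mem_cone a ha
  by_contra! h
  have : ⟪a, a⟫ ≤ 0 := calc
    ⟪a, a⟫ = ∑ b ∈ Δ, c b * ⟪b, a⟫ := by
      nth_rw 1 [hsum]
      simp only [sum_inner, real_inner_smul_left]
    _ ≤ 0 := Finset.sum_nonpos fun b hb => mul_nonpos_of_nonneg_of_nonpos (hc b) (h b hb)
  rw [real_inner_self_eq_norm_sq, ha.1.1] at this
  norm_num at this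

theorem exists_wordProd_eq_rootReflection [Finite G] (hΔ : IsSimpleSystem G x₀ Δ)
    (hx₀ : IsRegular G x₀) {a : V} (ha : a ∈ positiveRoots G x₀) :
    ∃ L : List V, (∀ δ ∈ L, δ ∈ Δ) ∧ wordProd L = rootReflection a := by
  -- take a counterexample `a` of minimal height `⟪a, x₀⟫`
  by_contra hfail
  obtain ⟨a, ⟨haP, haL⟩, hmin⟩ := Set.exists_min_image
    {a ∈ positiveRoots G x₀ |
      ¬∃ L : List V, (∀ δ ∈ L, δ ∈ Δ) ∧ wordProd L = rootReflection a}
    (⟪·, x₀⟫) (roots_finite.subset fun b hb => hb.1.1) ⟨a, ha, hfail⟩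
  obtain ⟨δ, hδ, hδa⟩ := hΔ.exists_mem_inner_pos haP
  have hδP := hΔ.subset_positiveRoots hδ
  by_cases haδ : a = δ
  · exact haL ⟨[δ], by simpa using hδ, by simp [haδ]⟩
  have hb := hΔ.rootReflection_apply_mem_positiveRoots hx₀ hδ haP haδ
  have hlower : ⟪rootReflection δ a, x₀⟫ < ⟪a, x₀⟫ := by
    rw [rootReflection_apply_of_norm_eq_one hδP.1.1, inner_sub_left, real_inner_smul_left,
      real_inner_comm δ a]
    nlinarith [hδP.2]
  obtain ⟨L, hL, hLb⟩ : ∃ L : List V, (∀ δ ∈ L, δ ∈ Δ) ∧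
      wordProd L = rootReflection (rootReflection δ a) := by
    by_contra h
    exact (hmin _ ⟨hb, h⟩).not_gt hlower
  refine haL ⟨δ :: L ++ [δ], ?_, ?_⟩
  · simpa [hδ, or_imp, forall_and] using hL
  · rw [List.cons_append, wordProd_cons, wordProd_append, hLb,
      rootReflection_map (rootReflection_mem_orthogonalGroup δ)]
    simp [mul_assoc]

theorem exists_wordProd_eq [Finite G] (hΔ : IsSimpleSystem G x₀ Δ) (hx₀ : IsRegular G x₀)
    (hgen : Subgroup.closure {t | t ∈ G ∧ IsReflAuto t} = G) {w : V ≃ₗ[ℝ] V} (hw : w ∈ G) :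
    ∃ L : List V, (∀ δ ∈ L, δ ∈ Δ) ∧ wordProd L = w := by
  rw [← hgen] at hw
  induction hw using Subgroup.closure_induction with
  | mem t ht =>
    obtain ⟨a, ha, rfl⟩ := exists_mem_roots_eq_rootReflection ht.1 ht.2
    rcases mem_positiveRoots_or_neg hx₀ ha with h | h
    · exact hΔ.exists_wordProd_eq_rootReflection hx₀ h
    · simpa [rootReflection_neg] using hΔ.exists_wordProd_eq_rootReflection hx₀ h
  | one => exact ⟨[], by simp, rfl⟩
  | mul x y _ _ hx hy =>
    obtain ⟨L, hL, rfl⟩ := hx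
    obtain ⟨M, hM, rfl⟩ := hy
    exact ⟨L ++ M, fun δ hδ => (List.mem_append.1 hδ).elim (hL δ) (hM δ),
      wordProd_append L M⟩
  | inv x _ hx =>
    obtain ⟨L, hL, rfl⟩ := hx
    exact ⟨L.reverse, fun δ hδ => hL δ (List.mem_reverse.1 hδ), wordProd_reverse L⟩

end IsSimpleSystem

end SimpleSystem

theorem eq_one_of_isRegular_of_apply_eq_self [Finite G]
    (hgen : Subgroup.closure {t | t ∈ G ∧ IsReflAuto t} = G) (hx₀ : IsRegular G x₀)
    {w : V ≃ₗ[ℝ] V} (hw : w ∈ G) (hfix : w x₀ = x₀) : w = 1 := by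
  classical
  obtain ⟨Δ, hΔ⟩ := exists_isSimpleSystem G x₀
  obtain ⟨L, hL, rfl⟩ := hΔ.exists_wordProd_eq hx₀ hgen hw
  exact hΔ.wordProd_eq_one_of_apply_eq_self hx₀ hL hfix

variable [FiniteDimensional ℝ V] [Finite G]

theorem exists_mem_roots_mem_range
    (hgen : Subgroup.closure {t | t ∈ G ∧ IsReflAuto t} = G) {w : V ≃ₗ[ℝ] V} (hw : w ∈ G)
    (hw1 : w ≠ 1) : ∃ a ∈ roots G, a ∈ range (LinearMap.id - (w : V →ₗ[ℝ] V)) := by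
  by_contra! h
  have : Finite (roots G) := roots_finite.to_subtype
  have hnot (a : roots G) : ∃ x ∈ ker (LinearMap.id - (w : V →ₗ[ℝ] V)),
      innerₛₗ ℝ (a : V) x ≠ 0 := by
    have := h a a.2
    rw [range_id_sub_eq_orthogonal_ker (le_orthogonalGroup hgen hw), mem_orthogonal] at this
    obtain ⟨x, hx, hax⟩ := not_forall₂.1 this
    exact ⟨x, hx, by rwa [innerₛₗ_apply_apply, real_inner_comm]⟩
  obtain ⟨x₀, hx₀, hreg⟩ := Module.Dual.exists_forall_mem_ne_zero_of_forall_exists _ _ hnot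
  exact hw1 (eq_one_of_isRegular_of_apply_eq_self hgen (fun a ha => hreg ⟨a, ha⟩) hw
    (mem_ker_id_sub.1 hx₀))

theorem exists_reflection_list_length_le_finrank
    (hgen : Subgroup.closure {t | t ∈ G ∧ IsReflAuto t} = G) {w : V ≃ₗ[ℝ] V} (hw : w ∈ G) :
    ∃ l : List (V ≃ₗ[ℝ] V),
      l.length ≤ finrank ℝ (range (LinearMap.id - (w : V →ₗ[ℝ] V))) ∧
      (∀ t ∈ l, t ∈ G ∧ IsReflAuto t) ∧ l.prod = w := by
  obtain ⟨n, hn⟩ : ∃ n, finrank ℝ (range (LinearMap.id - (w : V →ₗ[ℝ] V))) = n :=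
    ⟨_, rfl⟩
  induction n using Nat.strong_induction_on generalizing w with
  | _ n ih =>
  by_cases hw1 : w = 1
  · exact ⟨[], by simp, by simp, hw1.symm⟩
  obtain ⟨a, ha, haw⟩ := exists_mem_roots_mem_range hgen hw hw1
  have ha0 := ne_zero_of_mem_roots ha
  have hlt := finrank_range_id_sub_rootReflection_mul_lt (le_orthogonalGroup hgen hw) haw ha0
  obtain ⟨l, hl, hlG, hprod⟩ := ih _ (hn ▸ hlt) (mul_mem ha.2 hw) rfl
  refine ⟨rootReflection a :: l, by simp only [List.length_cons]; omega,
    List.forall_mem_cons.2 ⟨⟨ha.2, isReflAuto_iff.2 ⟨a, ha0, rfl⟩⟩, hlG⟩, ?_⟩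
  simp [hprod, ← mul_assoc]

theorem absLen_eq_finrank (hgen : Subgroup.closure {t | t ∈ G ∧ IsReflAuto t} = G)
    {w : V ≃ₗ[ℝ] V} (hw : w ∈ G) :
    absLen G w = finrank ℝ (range (LinearMap.id - (w : V →ₗ[ℝ] V))) := by
  obtain ⟨l, hl, hlG, hprod⟩ := exists_reflection_list_length_le_finrank hgen hw
  have hmem : l.length ∈ {r : ℕ | ∃ l : List (V ≃ₗ[ℝ] V),
      l.length = r ∧ (∀ t ∈ l, t ∈ G ∧ IsReflAuto t) ∧ l.prod = w} :=
    ⟨l, rfl, hlG, hprod⟩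
  obtain ⟨l₀, hl₀, hl₀G, hprod₀⟩ := Nat.sInf_mem ⟨_, hmem⟩
  refine le_antisymm ((Nat.sInf_le hmem).trans hl) ?_
  calc finrank ℝ (range (LinearMap.id - (w : V →ₗ[ℝ] V)))
      = finrank ℝ (range (LinearMap.id - (l₀.prod : V →ₗ[ℝ] V))) := by rw [hprod₀]
    _ ≤ l₀.length := finrank_range_id_sub_prod_le_length fun t ht => (hl₀G t ht).2
    _ = absLen G w := hl₀

end Roots

end ReflectionGroup

/-- Carter's Lemma: in a finite reflection group on a Euclidean space, the absolute length of
`w` equals `dim Im(id - w)`, and a product of reflections in roots `a_1, …, a_r` is reduced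
if and only if the roots are linearly independent. -/
theorem statement14 (V : Type) [NormedAddCommGroup V] [InnerProductSpace ℝ V]
    [FiniteDimensional ℝ V]
    (G : Subgroup (V ≃ₗ[ℝ] V)) (hfin : Finite G)
    (hgen : Subgroup.closure {t : V ≃ₗ[ℝ] V | t ∈ G ∧ IsReflAuto t} = G) :
    (∀ w ∈ G, absLen G w =
      Module.finrank ℝ (LinearMap.range (LinearMap.id - (w : V →ₗ[ℝ] V)))) ∧
    (∀ (r : ℕ) (a : Fin r → V) (w : V ≃ₗ[ℝ] V), w ∈ G → (∀ i, a i ≠ 0) →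
      (∀ i, ∃ g ∈ G, ∀ x, g x = sR (a i) x) →
      (∀ x, w x = (List.ofFn a).foldr sR x) →
      (absLen G w = r ↔ LinearIndependent ℝ a)) := by
  have hlen (w : V ≃ₗ[ℝ] V) (hw : w ∈ G) := ReflectionGroup.absLen_eq_finrank hgen hw
  refine ⟨hlen, fun r a w hw _ _ hwa => ?_⟩
  obtain rfl : w = ReflectionGroup.wordProd (List.ofFn a) :=
    LinearEquiv.ext fun x => (hwa x).trans (ReflectionGroup.wordProd_apply _ x).symm
  rw [hlen _ hw]
  exact ReflectionGroup.finrank_range_id_sub_wordProd_ofFn_eq_iff a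
end

section
/- Let A be a finite dimensional hereditary algebra and let X, Y be indecomposable A-modules with Ext¹_A(X,Y) = 0. Then every nonzero homomorphism Y → X is either injective or surjective. In particular, if X is an exceptional module (indecomposable with Ext¹_A(X,X) = 0), then End_A(X) is a division algebra. -/
/-!
Factor `f = i ∘ p` through `Z = im f`. Pull back a presentation `π : Aⁿ ↠ X` to `Ω = π⁻¹(Z)`,
which is projective because `A` is hereditary, so `π|Ω : Ω → Z` lifts along `p` to `ν : Ω → Y`.
The pushout `E` of `Y ←ν Ω ↪ Aⁿ` makes `0 → Y → Z × E → X → 0` exact (this realises the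
surjectivity of `Ext¹(X, Y) → Ext¹(X, Z)`), so it splits and `1_X = i s₁ + φ s₂` with
`φ : E → X`. By Fitting's lemma `End X` is local: if `i s₁` is invertible, `f` is onto;
otherwise `φ` has a section `σ`, and `E = ker φ ⊕ im σ` with `ker φ ⊆ im j` splits `Y` as
`ker f ⊕ j⁻¹(im σ)`, so by indecomposability `f` is injective or zero.
-/

/-- A module is indecomposable if it is nonzero and admits no nontrivial direct sum
decomposition. -/
def Indecomposable' (A : Type) [Ring A] (M : Type) [AddCommGroup M] [Module A M] : Prop :=
  (∃ m : M, m ≠ 0) ∧ ∀ U V : Submodule A M, IsCompl U V → U = ⊥ ∨ V = ⊥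

/-- `Ext¹_A(X,Y) = 0`: every short exact sequence `0 → Y → E → X → 0` splits. -/
def Ext1Zero (A : Type) [Ring A] (X Y : Type) [AddCommGroup X] [Module A X]
    [AddCommGroup Y] [Module A Y] : Prop :=
  ∀ (E : Type) [AddCommGroup E] [Module A E] (ι : Y →ₗ[A] E) (g : E →ₗ[A] X),
    Function.Injective ι → Function.Surjective g → LinearMap.range ι = LinearMap.ker g →
    ∃ s : X →ₗ[A] E, g.comp s = LinearMap.id

section Projective

variable {A : Type} [Ring A]

theorem Module.Projective.of_exact {K M P : Type} [AddCommGroup K] [Module A K]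
    [AddCommGroup M] [Module A M] [AddCommGroup P] [Module A P]
    [Module.Projective A K] [Module.Projective A P] {f : K →ₗ[A] M} {g : M →ₗ[A] P}
    (hfg : Function.Exact f g) (hf : Function.Injective f) (hg : Function.Surjective g) :
    Module.Projective A M :=
  have ⟨l, hl⟩ := g.exists_rightInverse_of_surjective (LinearMap.range_eq_top.mpr hg)
  .of_equiv (hfg.splitSurjectiveEquiv hf ⟨l, hl⟩).1.symm

theorem Module.Projective.of_ker_range {M N : Type} [AddCommGroup M] [Module A M]
    [AddCommGroup N] [Module A N] (φ : M →ₗ[A] N)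
    [Module.Projective A (LinearMap.ker φ)] [Module.Projective A (LinearMap.range φ)] :
    Module.Projective A M :=
  .of_exact (f := (LinearMap.ker φ).subtype) (g := φ.rangeRestrict)
    (LinearMap.exact_iff.mpr (by simp)) (Submodule.subtype_injective _)
    φ.surjective_rangeRestrict

theorem Module.Projective.submodule_fin_pi (hhered : ∀ I : Submodule A A, Module.Projective A I)
    (n : ℕ) (S : Submodule A (Fin n → A)) : Module.Projective A S := by
  induction n with
  | zero =>
    exact .of_equiv (LinearEquiv.ofSubsingleton (Fin 0 → A) S)
  | succ n ih =>
    let φ : S →ₗ[A] A := (LinearMap.proj (Fin.last n)).comp S.subtype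
    let ψ : LinearMap.ker φ →ₗ[A] (Fin n → A) :=
      (LinearMap.funLeft A A Fin.castSucc).comp (S.subtype.comp (LinearMap.ker φ).subtype)
    have hψ : Function.Injective ψ := by
      intro x y hxy
      ext i
      induction i using Fin.lastCases with
      | last => exact x.2.trans y.2.symm
      | cast j => exact congrFun hxy j
    have := hhered (LinearMap.range φ)
    have := Module.Projective.of_equiv (LinearEquiv.ofInjective ψ hψ).symm
    exact .of_ker_range φ

end Projective

namespace LinearPushout

variable {A : Type} [Ring A] {X Y P : Type} [AddCommGroup X] [Module A X]
  [AddCommGroup Y] [Module A Y] [AddCommGroup P] [Module A P] {Ω : Submodule A P}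

/-- `Obj ν = (Y × P) ⧸ rel ν` is the pushout of `ν : Ω → Y` along the inclusion `Ω ≤ P`. -/
def rel (ν : Ω →ₗ[A] Y) : Submodule A (Y × P) :=
  LinearMap.range (ν.prod (-Ω.subtype))

abbrev Obj (ν : Ω →ₗ[A] Y) : Type := (Y × P) ⧸ rel ν

variable (ν : Ω →ₗ[A] Y)

def inl : Y →ₗ[A] Obj ν := (rel ν).mkQ ∘ₗ LinearMap.inl A Y P

theorem mk_of_mem (y : Y) (w : Ω) :
    (Submodule.Quotient.mk (y, (w : P)) : Obj ν) = inl ν (y + ν w) := by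
  rw [inl, LinearMap.comp_apply, LinearMap.inl_apply, Submodule.mkQ_apply, Submodule.Quotient.eq]
  exact ⟨-w, by simp⟩

theorem inl_injective : Function.Injective (inl ν) := by
  rw [← LinearMap.ker_eq_bot, Submodule.eq_bot_iff]
  rintro y hy
  obtain ⟨w, hw⟩ : (y, (0 : P)) ∈ rel ν := by
    simpa [inl, Submodule.Quotient.mk_eq_zero] using hy
  have hw0 : w = 0 := by simpa using congrArg Prod.snd hw
  simpa [hw0] using (congrArg Prod.fst hw).symm

variable {ν} (g : Y →ₗ[A] X) (h : P →ₗ[A] X)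

def desc (hgh : g ∘ₗ ν = h ∘ₗ Ω.subtype) : Obj ν →ₗ[A] X :=
  (rel ν).liftQ (g.coprod h) <| by
    rintro _ ⟨w, rfl⟩
    simpa [← sub_eq_add_neg, sub_eq_zero] using LinearMap.congr_fun hgh w

variable (hgh : g ∘ₗ ν = h ∘ₗ Ω.subtype)

@[simp]
theorem desc_mk (y : Y) (a : P) :
    desc g h hgh (Submodule.Quotient.mk (y, a)) = g y + h a := rfl

theorem desc_comp_inl : desc g h hgh ∘ₗ inl ν = g := by
  ext y
  simp [inl]

theorem desc_surjective (hh : Function.Surjective h) : Function.Surjective (desc g h hgh) :=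
  fun x ↦ (hh x).elim fun a ha ↦ ⟨Submodule.Quotient.mk (0, a), by simp [ha]⟩

theorem ker_desc_le_range_inl (hΩ : (LinearMap.range g).comap h ≤ Ω) :
    LinearMap.ker (desc g h hgh) ≤ LinearMap.range (inl ν) := by
  intro e he
  obtain ⟨⟨y, a⟩, rfl⟩ := (rel ν).mkQ_surjective e
  have hy : g y + h a = 0 := he
  have ha : a ∈ Ω := hΩ ⟨-y, by simp [eq_neg_of_add_eq_zero_right hy]⟩
  exact ⟨y + ν ⟨a, ha⟩, (mk_of_mem ν y ⟨a, ha⟩).symm⟩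

end LinearPushout

section LocalEnd

variable {A : Type} [Ring A]

theorem Module.End.isUnit_or_isNilpotent {X : Type} [AddCommGroup X] [Module A X]
    [IsNoetherian A X] [IsArtinian A X] (hX : Indecomposable' A X) (h : Module.End A X) :
    IsUnit h ∨ IsNilpotent h := by
  obtain ⟨n, hcompl, hn⟩ :=
    (h.eventually_isCompl_ker_pow_range_pow.and (Filter.eventually_gt_atTop 0)).exists
  rcases hX.2 _ _ hcompl with hker | hrange
  · left
    rw [← isUnit_pow_iff hn.ne', Module.End.isUnit_iff]
    exact IsArtinian.bijective_of_injective_endomorphism _ (LinearMap.ker_eq_bot.mp hker)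
  · exact .inr ⟨n, LinearMap.range_eq_bot.mp hrange⟩

theorem Module.End.isLocalRing_of_indecomposable {X : Type} [AddCommGroup X] [Module A X]
    [IsNoetherian A X] [IsArtinian A X] (hX : Indecomposable' A X) :
    IsLocalRing (Module.End A X) :=
  have : Nontrivial X := let ⟨m, hm⟩ := hX.1; nontrivial_of_ne m 0 hm
  .of_isUnit_or_isUnit_one_sub_self fun h ↦
    (isUnit_or_isNilpotent hX h).imp_right IsNilpotent.isUnit_one_sub

end LocalEnd

section Extension

variable {A : Type} [Ring A] {X Y Z E : Type} [AddCommGroup X] [Module A X]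
  [AddCommGroup Y] [Module A Y] [AddCommGroup Z] [Module A Z] [AddCommGroup E] [Module A E]

theorem LinearMap.isCompl_ker_comp_comap_range {j : Y →ₗ[A] E} {φ : E →ₗ[A] X}
    (hj : Function.Injective j) (hker : LinearMap.ker φ ≤ LinearMap.range j)
    {σ : X →ₗ[A] E} (hσ : φ ∘ₗ σ = LinearMap.id) :
    IsCompl (LinearMap.ker (φ ∘ₗ j)) ((LinearMap.range σ).comap j) := by
  have hφσ (x : X) : φ (σ x) = x := LinearMap.congr_fun hσ x
  constructor
  · rw [Submodule.disjoint_def]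
    rintro y hy ⟨x, hx⟩
    have hx0 : x = 0 := by rw [← hφσ x, hx]; exact hy
    exact hj (by rw [← hx, hx0, map_zero, map_zero])
  · rw [codisjoint_iff, eq_top_iff]
    rintro y -
    obtain ⟨y₁, hy₁⟩ : j y - σ (φ (j y)) ∈ LinearMap.range j :=
      hker (by simp [hφσ])
    refine Submodule.mem_sup.mpr ⟨y₁, ?_, y - y₁, ⟨φ (j y), ?_⟩, add_sub_cancel y₁ y⟩
    · simp [hy₁, hφσ]
    · rw [map_sub, hy₁, sub_sub_cancel]

theorem LinearMap.comp_eq_zero_or_injective_of_indecomposable (hY : Indecomposable' A Y)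
    {j : Y →ₗ[A] E} {φ : E →ₗ[A] X} (hj : Function.Injective j)
    (hker : LinearMap.ker φ ≤ LinearMap.range j) {σ : X →ₗ[A] E} (hσ : φ ∘ₗ σ = LinearMap.id) :
    φ ∘ₗ j = 0 ∨ Function.Injective (φ ∘ₗ j) := by
  have hcompl := isCompl_ker_comp_comap_range hj hker hσ
  rcases hY.2 _ _ hcompl with hU | hV
  · exact .inr (LinearMap.ker_eq_bot.mp hU)
  · exact .inl (LinearMap.ker_eq_top.mp (eq_top_of_isCompl_bot (hV ▸ hcompl)))

theorem LinearMap.exact_prod_fst_sub_snd {p : Y →ₗ[A] Z} {i : Z →ₗ[A] X} {j : Y →ₗ[A] E}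
    {φ : E →ₗ[A] X} (hp : Function.Surjective p) (hi : Function.Injective i)
    (hcomm : i ∘ₗ p = φ ∘ₗ j) (hker : LinearMap.ker φ ≤ LinearMap.range j) :
    Function.Exact (p.prod j) (i ∘ₗ LinearMap.fst A Z E - φ ∘ₗ LinearMap.snd A Z E) := by
  have hcomm' (y : Y) : i (p y) = φ (j y) := LinearMap.congr_fun hcomm y
  refine LinearMap.exact_iff.mpr (le_antisymm ?_ ?_)
  · rintro ⟨z, e⟩ hze
    obtain ⟨y₀, rfl⟩ := hp z
    have hze' : i (p y₀) = φ e := sub_eq_zero.mp hze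
    have he : e - j y₀ ∈ LinearMap.ker φ := by
      rw [LinearMap.mem_ker, map_sub, ← hcomm', hze', sub_self]
    obtain ⟨y₁, hy₁⟩ := hker he
    have hpy₁ : p y₁ = 0 := hi (by rw [hcomm', hy₁, map_zero]; exact he)
    exact ⟨y₀ + y₁, by simp [hpy₁, hy₁]⟩
  · rintro _ ⟨y, rfl⟩
    simp [hcomm']

theorem exists_extension_of_hereditary (hhered : ∀ I : Submodule A A, Module.Projective A I)
    [Module.Finite A X] (f : Y →ₗ[A] X) :
    ∃ (E : Type) (_ : AddCommGroup E) (_ : Module A E) (j : Y →ₗ[A] E) (φ : E →ₗ[A] X),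
      φ ∘ₗ j = f ∧ Function.Injective j ∧ Function.Surjective φ ∧
        LinearMap.ker φ ≤ LinearMap.range j := by
  obtain ⟨n, π, hπ⟩ := Module.Finite.exists_fin' A X
  let Ω := (LinearMap.range f).comap π
  have := Module.Projective.submodule_fin_pi hhered n Ω
  obtain ⟨ν, hν⟩ := Module.projective_lifting_property f.rangeRestrict
    (π.restrict fun _ ha ↦ ha : Ω →ₗ[A] LinearMap.range f) f.surjective_rangeRestrict
  have hfν : f ∘ₗ ν = π ∘ₗ Ω.subtype := by
    ext w
    exact congrArg Subtype.val (LinearMap.congr_fun hν w)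
  exact ⟨_, _, _, LinearPushout.inl ν, LinearPushout.desc f π hfν,
    LinearPushout.desc_comp_inl f π hfν, LinearPushout.inl_injective ν,
    LinearPushout.desc_surjective f π hfν hπ, LinearPushout.ker_desc_le_range_inl f π hfν le_rfl⟩

theorem injective_or_surjective_of_ext1Zero
    (hhered : ∀ I : Submodule A A, Module.Projective A I)
    [Module.Finite A X] [IsLocalRing (Module.End A X)] (hY : Indecomposable' A Y)
    (hext : Ext1Zero A X Y) (f : Y →ₗ[A] X) (hf : f ≠ 0) :
    Function.Injective f ∨ Function.Surjective f := by
  obtain ⟨E, _, _, j, φ, hφj, hj, hφ, hker⟩ := exists_extension_of_hereditary hhered f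
  let i := (LinearMap.range f).subtype
  have hexact := LinearMap.exact_prod_fst_sub_snd f.surjective_rangeRestrict
    (Submodule.subtype_injective _) (i := i) (by rw [hφj]; rfl) hker
  obtain ⟨s, hs⟩ := hext _ _ _ (fun a b hab ↦ hj (congrArg Prod.snd hab))
    (fun x ↦ (hφ x).elim fun e he ↦ ⟨(0, -e), by simp [he]⟩) (LinearMap.exact_iff.mp hexact).symm
  have hsum : i ∘ₗ LinearMap.fst A _ E ∘ₗ s + φ ∘ₗ (-(LinearMap.snd A _ E ∘ₗ s)) = 1 := by
    ext x
    simpa [sub_eq_add_neg] using LinearMap.congr_fun hs x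
  rcases IsLocalRing.isUnit_or_isUnit_of_add_one hsum with hu | hu
  · refine .inr fun x ↦ ?_
    obtain ⟨x', rfl⟩ := ((Module.End.isUnit_iff _).mp hu).2 x
    exact (LinearMap.fst A _ E (s x')).2
  · have hσ : φ ∘ₗ (-(LinearMap.snd A _ E ∘ₗ s)) ∘ₗ ↑hu.unit⁻¹ = LinearMap.id := by
      rw [← LinearMap.comp_assoc]
      exact hu.unit.mul_inv
    have := LinearMap.comp_eq_zero_or_injective_of_indecomposable hY hj hker hσ
    rw [hφj] at this
    exact .inl (this.resolve_left hf)

end Extension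

theorem statement16_general (k : Type) [Field k] (A : Type) [Ring A] [Algebra k A]
    (hhered : ∀ I : Submodule A A, Module.Projective A I)
    (X Y : Type) [AddCommGroup X] [Module A X] [AddCommGroup Y] [Module A Y]
    [Module k X] [IsScalarTower k A X] [FiniteDimensional k X]
    (hX : Indecomposable' A X) (hY : Indecomposable' A Y)
    (hext : Ext1Zero A X Y) :
    (∀ f : Y →ₗ[A] X, f ≠ 0 → Function.Injective f ∨ Function.Surjective f) ∧
    (Ext1Zero A X X → ∀ f : X →ₗ[A] X, f ≠ 0 → Function.Bijective f) := by
  have : Module.Finite A X := .of_restrictScalars_finite k A X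
  have : IsNoetherian A X := isNoetherian_of_tower k inferInstance
  have : IsArtinian A X := isArtinian_of_tower k inferInstance
  have : IsLocalRing (Module.End A X) := Module.End.isLocalRing_of_indecomposable hX
  refine ⟨injective_or_surjective_of_ext1Zero hhered hY hext, fun hXX f hf ↦ ?_⟩
  rcases injective_or_surjective_of_ext1Zero hhered hX hXX f hf with hinj | hsurj
  · exact IsArtinian.bijective_of_injective_endomorphism f hinj
  · exact IsNoetherian.bijective_of_surjective_endomorphism f hsurj

/-- Happel–Ringel: over a finite dimensional hereditary algebra, if `X`, `Y` are
indecomposable and `Ext¹(X,Y) = 0`, every nonzero map `Y → X` is injective or surjective;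
in particular the endomorphism ring of an exceptional module is a division algebra. -/
theorem statement16 (k : Type) [Field k] (A : Type) [Ring A] [Algebra k A]
    [FiniteDimensional k A]
    (hhered : ∀ I : Submodule A A, Module.Projective A I)
    (X Y : Type) [AddCommGroup X] [Module A X] [AddCommGroup Y] [Module A Y]
    [Module k X] [IsScalarTower k A X] [FiniteDimensional k X]
    [Module k Y] [IsScalarTower k A Y] [FiniteDimensional k Y]
    (hX : Indecomposable' A X) (hY : Indecomposable' A Y)
    (hext : Ext1Zero A X Y) :
    (∀ f : Y →ₗ[A] X, f ≠ 0 → Function.Injective f ∨ Function.Surjective f) ∧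
    (Ext1Zero A X X → ∀ f : X →ₗ[A] X, f ≠ 0 → Function.Bijective f) :=
  statement16_general k A hhered X Y hX hY hext
end

section
/- A Coxeter system (W,S) arises as the Weyl group of a symmetrisable Kac–Moody Lie algebra if and only if: (1) m_{st} ∈ {2,3,4,6,∞} for all s ≠ t in S, and (2) in each circuit of the Coxeter graph not containing an edge with label ∞, the number of edges labelled 4 is even, and the number of edges labelled 6 is even. -/
/-- The Coxeter exponent `m_{ij}` attached to a generalised Cartan matrix, in terms of the
product `p = c_{ij} c_{ji}`: `m = 2, 3, 4, 6, ∞` according as `p = 0, 1, 2, 3, ≥ 4`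
(with `∞` encoded as `0`). -/
def coxeterExponentOf (p : ℤ) : ℕ :=
  if p = 0 then 2 else if p = 1 then 3 else if p = 2 then 4 else if p = 3 then 6 else 0

/-- The list of consecutive pairs of a closed walk through the vertices of `l`. -/
def cyclePairs {B : Type} (l : List B) : List (B × B) :=
  l.zip (l.rotate 1)

/-!
If `d` symmetrises `C`, then along an edge `{i, j}` with finite label `m ≥ 3` the ratio
`d i / d j` is `c_{ij} c_{ji} = 1, 2, 3` or its inverse, according as `m = 3, 4, 6`. So the
parity of the 2-adic (resp. 3-adic) valuation of `d` flips exactly along the edges labelled `4`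
(resp. `6`), and these flips cancel around every closed walk.

Conversely, the condition on circuits says that the `ZMod 2`-valued edge functions
"the label is 4" and "the label is 6" on the graph of finite edges integrate along walks to
well-defined potentials `a, b : B → ZMod 2`. The weights `D i = 2 ^ a i * 3 ^ b i` then have ratio
`1, 2, 3` along the edges labelled `3, 4, 6`, and a Cartan matrix symmetrised by `D` can be read
off from them.
-/

open SimpleGraph

theorem List.even_countP_iff_sum_map_eq_zero {α : Type*} (P : α → Prop) [DecidablePred P]
    (L : List α) :
    Even (L.countP fun x => decide (P x)) ↔
      (L.map fun x => if P x then (1 : ZMod 2) else 0).sum = 0 := by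
  rw [← ZMod.natCast_eq_zero_iff_even, List.sum_map_ite]
  simp [List.countP_eq_length_filter]

theorem sum_cyclePairs_eq_zero_of_potential {B : Type} {A : Type*} [AddCommGroup A]
    (l : List B) (g : B → A) (f : B × B → A)
    (h : ∀ p ∈ cyclePairs l, g p.2 = g p.1 + f p) :
    ((cyclePairs l).map f).sum = 0 := by
  have hlen : (l.rotate 1).length = l.length := l.length_rotate 1
  have hfst : (cyclePairs l).map (fun p => g p.1) = l.map g := by
    conv_rhs => rw [← List.map_fst_zip hlen.ge, List.map_map]
    rfl
  have hsnd : (cyclePairs l).map (fun p => g p.2) = (l.rotate 1).map g := by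
    conv_rhs => rw [← List.map_snd_zip hlen.le, List.map_map]
    rfl
  have hsum := congrArg List.sum (List.map_congr_left h)
  rw [hsnd, List.sum_map_add, hfst, ((l.rotate_perm 1).map g).sum_eq] at hsum
  simpa using hsum

theorem even_countP_cyclePairs_of_potential {B : Type} (l : List B) (P : B × B → Prop)
    [DecidablePred P] (g : B → ZMod 2)
    (h : ∀ p ∈ cyclePairs l, g p.2 = g p.1 + if P p then 1 else 0) :
    Even ((cyclePairs l).countP fun p => decide (P p)) :=
  (List.even_countP_iff_sum_map_eq_zero P _).2 (sum_cyclePairs_eq_zero_of_potential l g _ h)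

namespace SimpleGraph

variable {V : Type*} {A : Type*} [AddCommGroup A] {G : SimpleGraph V}

def Walk.edgeSum (f : V → V → A) {u v : V} (p : G.Walk u v) : A :=
  (p.darts.map fun d => f d.fst d.snd).sum

namespace Walk

variable (f : V → V → A)

theorem edgeSum_append {u v w : V} (p : G.Walk u v) (q : G.Walk v w) :
    (p.append q).edgeSum f = p.edgeSum f + q.edgeSum f := by
  simp [edgeSum, darts_append]

theorem edgeSum_concat {u v w : V} (p : G.Walk u v) (h : G.Adj v w) :
    (p.concat h).edgeSum f = p.edgeSum f + f v w := by
  simp [edgeSum, darts_concat]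

theorem edgeSum_copy {u v u' v' : V} (p : G.Walk u v) (hu : u = u') (hv : v = v') :
    (p.copy hu hv).edgeSum f = p.edgeSum f := by
  simp [edgeSum, darts_copy]

theorem edgeSum_reverse {f : V → V → A} (hf : ∀ i j, G.Adj i j → f j i = -f i j)
    {u v : V} (p : G.Walk u v) : p.reverse.edgeSum f = -p.edgeSum f := by
  simp only [edgeSum, darts_reverse, List.map_reverse, List.map_map, List.sum_reverse]
  rw [List.map_congr_left fun d _ => hf d.fst d.snd d.adj, List.sum_neg, List.map_map]
  rfl

end Walk

theorem exists_potential_of_edgeSum_eq_zero (f : V → V → A)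
    (hf : ∀ i j, G.Adj i j → f j i = -f i j) (h : ∀ u (w : G.Walk u u), w.edgeSum f = 0) :
    ∃ g : V → A, ∀ i j, G.Adj i j → g j = g i + f i j := by
  have hindep {u v : V} (p q : G.Walk u v) : p.edgeSum f = q.edgeSum f := by
    have hpq := h u (p.append q.reverse)
    rwa [Walk.edgeSum_append, Walk.edgeSum_reverse hf, ← sub_eq_add_neg, sub_eq_zero] at hpq
  let base (v : V) : V := (G.connectedComponentMk v).out
  have hreach (v : V) : G.Reachable (base v) v := ConnectedComponent.exact (Quot.out_eq _)
  refine ⟨fun v => (hreach v).some.edgeSum f, fun i j hij => ?_⟩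
  have hbase : base i = base j := by
    simp only [base, ConnectedComponent.connectedComponentMk_eq_of_adj hij]
  change (hreach j).some.edgeSum f = (hreach i).some.edgeSum f + f i j
  rw [hindep _ (((hreach i).some.concat hij).copy hbase rfl), Walk.edgeSum_copy,
    Walk.edgeSum_concat]

theorem Walk.cyclePairs_map_fst_darts {V : Type} {G : SimpleGraph V} {u : V} (w : G.Walk u u) :
    cyclePairs (w.darts.map (·.fst)) = w.darts.map (·.toProd) := by
  have hrot : (w.darts.map (·.fst)).rotate 1 = w.darts.map (·.snd) := by
    cases w with
    | nil => rfl
    | cons h p =>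
      rw [darts_cons, List.map_cons, List.map_cons, List.rotate_cons_succ, List.rotate_zero,
        map_fst_darts_append, map_snd_darts, cons_tail_support]
  rw [cyclePairs, hrot, List.zip_map']

end SimpleGraph

theorem coxeterExponentOf_mem (p : ℤ) : coxeterExponentOf p ∈ ({2, 3, 4, 6, 0} : Set ℕ) := by
  unfold coxeterExponentOf
  split_ifs <;> simp

theorem coxeterExponentOf_of_four_le {p : ℤ} (hp : 4 ≤ p) : coxeterExponentOf p = 0 := by
  unfold coxeterExponentOf
  split_ifs <;> omega

theorem mem_Icc_of_three_le_coxeterExponentOf {p : ℤ} (h : 3 ≤ coxeterExponentOf p) :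
    p ∈ Set.Icc 1 3 := by
  unfold coxeterExponentOf at h
  split_ifs at h <;> simp only [Set.mem_Icc] <;> omega

theorem padicValRat_two_of_three_le_coxeterExponentOf {p : ℤ} (h : 3 ≤ coxeterExponentOf p) :
    ((padicValRat 2 p : ℤ) : ZMod 2) = if coxeterExponentOf p = 4 then 1 else 0 := by
  obtain ⟨h1, h3⟩ := mem_Icc_of_three_le_coxeterExponentOf h
  rw [padicValRat.of_int]
  interval_cases p <;> norm_num [coxeterExponentOf, padicValInt, padicValNat.eq_zero_of_not_dvd]

theorem padicValRat_three_of_three_le_coxeterExponentOf {p : ℤ} (h : 3 ≤ coxeterExponentOf p) :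
    ((padicValRat 3 p : ℤ) : ZMod 2) = if coxeterExponentOf p = 6 then 1 else 0 := by
  obtain ⟨h1, h3⟩ := mem_Icc_of_three_le_coxeterExponentOf h
  rw [padicValRat.of_int]
  interval_cases p <;> norm_num [coxeterExponentOf, padicValInt, padicValNat.eq_zero_of_not_dvd]

theorem eq_mul_or_eq_mul_of_mul_eq_mul {x y : ℤ} {a b : ℚ} (hx : x ≤ 0) (hy : y ≤ 0)
    (hxy : x * y ∈ Set.Icc 1 3) (h : a * x = b * y) :
    b = (x * y : ℤ) * a ∨ a = (x * y : ℤ) * b := by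
  obtain ⟨h1, h3⟩ := hxy
  have : x = -1 ∨ y = -1 := by
    by_contra! hne
    have hx0 : x ≠ 0 := by rintro rfl; simp at h1
    have hy0 : y ≠ 0 := by rintro rfl; simp at h1
    nlinarith [(by omega : x ≤ -2), (by omega : y ≤ -2)]
  rcases this with rfl | rfl
  · right
    push_cast at h ⊢
    linarith
  · left
    push_cast at h ⊢
    linarith

theorem padicValRat_eq_add_of_eq_mul_or {p : ℕ} [Fact p.Prime] {r a b : ℚ} (hr : r ≠ 0)
    (ha : a ≠ 0) (h : b = r * a ∨ a = r * b) :
    ((padicValRat p b : ℤ) : ZMod 2) = padicValRat p a + padicValRat p r := by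
  rcases h with rfl | rfl
  · rw [padicValRat.mul hr ha, Int.cast_add, add_comm]
  · rw [padicValRat.mul hr (right_ne_zero_of_mul ha), Int.cast_add, add_comm,
      ← add_assoc, CharTwo.add_self_eq_zero, zero_add]

theorem max_div_mul_max_div {a b r : ℕ} (ha : 0 < a) (hb : 0 < b) (h : b = r * a ∨ a = r * b) :
    a * (max a b / a) = max a b ∧ b * (max a b / b) = max a b ∧
      max a b / a * (max a b / b) = r := by
  rcases h with rfl | rfl
  · have hr : 0 < r := Nat.pos_of_mul_pos_right hb
    rw [max_eq_right (Nat.le_mul_of_pos_left a hr), Nat.mul_div_cancel _ ha, Nat.div_self hb]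
    exact ⟨mul_comm _ _, mul_one _, mul_one _⟩
  · have hr : 0 < r := Nat.pos_of_mul_pos_right ha
    rw [max_eq_left (Nat.le_mul_of_pos_left b hr), Nat.mul_div_cancel _ hb, Nat.div_self ha]
    exact ⟨mul_one _, mul_comm _ _, one_mul _⟩

theorem exists_weight_ratio_of_parity_step {m : ℕ} (hm : m = 3 ∨ m = 4 ∨ m = 6)
    {a b a' b' : ZMod 2} (ha : a' = a + if m = 4 then 1 else 0)
    (hb : b' = b + if m = 6 then 1 else 0) :
    ∃ r : ℕ, coxeterExponentOf r = m ∧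
      (2 ^ a'.val * 3 ^ b'.val = r * (2 ^ a.val * 3 ^ b.val) ∨
        2 ^ a.val * 3 ^ b.val = r * (2 ^ a'.val * 3 ^ b'.val)) := by
  subst ha hb
  rcases hm with rfl | rfl | rfl
  exacts [⟨1, rfl, by revert a b; decide⟩, ⟨2, rfl, by revert a b; decide⟩,
    ⟨3, rfl, by revert a b; decide⟩]

namespace CoxeterMatrix

variable {B : Type} (M : CoxeterMatrix B)

theorem ne_of_three_le {i j : B} (h : 3 ≤ M i j) : i ≠ j := by
  rintro rfl
  simp at h

/-- The Coxeter graph without its `∞`-edges (`∞` is encoded as `0`). -/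
def finiteGraph : SimpleGraph B where
  Adj i j := 3 ≤ M i j
  symm := ⟨fun i j h => by rwa [M.symmetric]⟩
  loopless := ⟨fun _ h => M.ne_of_three_le h rfl⟩

theorem edgeSum_finiteGraph_eq_zero (k : ℕ)
    (hk : ∀ l : List B, l ≠ [] → (∀ p ∈ cyclePairs l, 3 ≤ M p.1 p.2) →
      Even ((cyclePairs l).countP fun p => decide (M p.1 p.2 = k)))
    {u : B} (w : M.finiteGraph.Walk u u) :
    w.edgeSum (fun i j => if M i j = k then (1 : ZMod 2) else 0) = 0 := by
  by_cases hw : w.darts = []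
  · simp [Walk.edgeSum, hw]
  have hpairs := w.cyclePairs_map_fst_darts
  have hl : w.darts.map (·.fst) ≠ [] := by simpa using hw
  have hadj : ∀ p ∈ cyclePairs (w.darts.map (·.fst)), 3 ≤ M p.1 p.2 := by
    rw [hpairs]
    intro p hp
    obtain ⟨d, -, rfl⟩ := List.mem_map.1 hp
    exact d.adj
  have := (List.even_countP_iff_sum_map_eq_zero (fun p : B × B => M p.1 p.2 = k) _).1
    (hk _ hl hadj)
  rwa [hpairs, List.map_map] at this

theorem padicValRat_step_of_cartan {C : Matrix B B ℤ} (hC : ∀ i j, i ≠ j → C i j ≤ 0)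
    {d : B → ℚ} (hd : ∀ i, 0 < d i) (hsym : ∀ i j, d i * C i j = d j * C j i)
    (hM : ∀ i j, i ≠ j → M i j = coxeterExponentOf (C i j * C j i)) {i j : B}
    (hij : 3 ≤ M i j) :
    ((padicValRat 2 (d j) : ℤ) : ZMod 2) =
      padicValRat 2 (d i) + (if M i j = 4 then 1 else 0) ∧
    ((padicValRat 3 (d j) : ℤ) : ZMod 2) =
      padicValRat 3 (d i) + (if M i j = 6 then 1 else 0) := by
  have hne := M.ne_of_three_le hij
  rw [hM i j hne] at hij ⊢
  have hp := mem_Icc_of_three_le_coxeterExponentOf hij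
  have hp0 : ((C i j * C j i : ℤ) : ℚ) ≠ 0 := Int.cast_ne_zero.2 (one_pos.trans_le hp.1).ne'
  have hratio := eq_mul_or_eq_mul_of_mul_eq_mul (hC i j hne) (hC j i hne.symm) hp (hsym i j)
  rw [← padicValRat_two_of_three_le_coxeterExponentOf hij,
    ← padicValRat_three_of_three_le_coxeterExponentOf hij]
  exact ⟨padicValRat_eq_add_of_eq_mul_or hp0 (hd i).ne' hratio,
    padicValRat_eq_add_of_eq_mul_or hp0 (hd i).ne' hratio⟩

theorem exists_cartan_of_weights (D : B → ℕ) (hD : ∀ i, 0 < D i)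
    (hratio : ∀ i j, 3 ≤ M i j →
      ∃ r : ℕ, coxeterExponentOf r = M i j ∧ (D j = r * D i ∨ D i = r * D j)) :
    ∃ C : Matrix B B ℤ, (∀ i, C i i = 2) ∧ (∀ i j : B, i ≠ j → C i j ≤ 0) ∧
      (∃ d : B → ℚ, (∀ i, 0 < d i) ∧
        ∀ i j : B, d i * (C i j : ℚ) = d j * (C j i : ℚ)) ∧
      (∀ i j : B, i ≠ j → M i j = coxeterExponentOf (C i j * C j i)) := by
  classical
  -- `d i * C i j` is `-max (D i) (D j)` on finite edges and `-2 * D i * D j` on `∞`-edges.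
  let C : Matrix B B ℤ := Matrix.of fun i j =>
    if i = j then 2 else if M i j = 0 then -2 * D j else if M i j = 2 then 0
    else -((max (D i) (D j) / D i : ℕ) : ℤ)
  have hlabel (i j : B) (hij : i ≠ j) : M i j = 0 ∨ M i j = 2 ∨ 3 ≤ M i j := by
    have := M.off_diagonal i j hij
    omega
  have hC (i j : B) (hij : i ≠ j) : C i j = if M i j = 0 then -2 * (D j : ℤ)
      else if M i j = 2 then 0 else -((max (D i) (D j) / D i : ℕ) : ℤ) := by
    simp only [C, Matrix.of_apply, if_neg hij]
  refine ⟨C, fun i => by simp [C], fun i j hij => ?_,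
    ⟨fun i => D i, fun i => Nat.cast_pos.2 (hD i), fun i j => ?_⟩, fun i j hij => ?_⟩
  · rw [hC i j hij]
    split_ifs
    exacts [by omega, le_rfl, neg_nonpos.2 (Nat.cast_nonneg _)]
  · rcases eq_or_ne i j with rfl | hij
    · rfl
    rw [hC i j hij, hC j i hij.symm, M.symmetric j i, max_comm (D j)]
    rcases hlabel i j hij with h | h | h
    · simp only [h, if_true]
      push_cast
      ring
    · simp [h]
    · obtain ⟨r, -, hDr⟩ := hratio i j h
      obtain ⟨hi, hj, -⟩ := max_div_mul_max_div (hD i) (hD j) hDr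
      simp only [show M i j ≠ 0 by omega, show M i j ≠ 2 by omega, if_false]
      push_cast
      rw [mul_neg, mul_neg, neg_inj]
      exact_mod_cast hi.trans hj.symm
  · rw [hC i j hij, hC j i hij.symm, M.symmetric j i, max_comm (D j)]
    rcases hlabel i j hij with h | h | h
    · simp only [h, if_true]
      exact (coxeterExponentOf_of_four_le (by nlinarith [hD i, hD j])).symm
    · simp only [h, if_true, show (2 : ℕ) ≠ 0 by omega, if_false, mul_zero]
      rfl
    · obtain ⟨r, hr, hDr⟩ := hratio i j h
      obtain ⟨-, -, hprod⟩ := max_div_mul_max_div (hD i) (hD j) hDr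
      simp only [show M i j ≠ 0 by omega, show M i j ≠ 2 by omega, if_false]
      rw [neg_mul_neg, ← Nat.cast_mul, hprod, hr]

end CoxeterMatrix

theorem statement19_general (B : Type) (M : CoxeterMatrix B) :
    (∃ C : Matrix B B ℤ,
      (∀ i, C i i = 2) ∧
      (∀ i j : B, i ≠ j → C i j ≤ 0) ∧
      (∃ d : B → ℚ, (∀ i, 0 < d i) ∧ ∀ i j : B, d i * (C i j : ℚ) = d j * (C j i : ℚ)) ∧
      (∀ i j : B, i ≠ j → M i j = coxeterExponentOf (C i j * C j i))) ↔
    ((∀ i j : B, i ≠ j → M i j ∈ ({2, 3, 4, 6, 0} : Set ℕ)) ∧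
      (∀ l : List B, l ≠ [] →
        (∀ p ∈ cyclePairs l, 3 ≤ M p.1 p.2) →
        Even ((cyclePairs l).countP (fun p => decide (M p.1 p.2 = 4))) ∧
        Even ((cyclePairs l).countP (fun p => decide (M p.1 p.2 = 6))))) := by
  constructor
  · rintro ⟨C, -, hC, ⟨d, hd, hsym⟩, hM⟩
    refine ⟨fun i j hij => hM i j hij ▸ coxeterExponentOf_mem _, fun l _ hl => ⟨?_, ?_⟩⟩
    · exact even_countP_cyclePairs_of_potential l _ (fun v => (padicValRat 2 (d v) : ZMod 2))
        fun p hp => (M.padicValRat_step_of_cartan hC hd hsym hM (hl p hp)).1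
    · exact even_countP_cyclePairs_of_potential l _ (fun v => (padicValRat 3 (d v) : ZMod 2))
        fun p hp => (M.padicValRat_step_of_cartan hC hd hsym hM (hl p hp)).2
  · rintro ⟨hlabels, hcycles⟩
    have hsymm (k : ℕ) (i j : B) (_ : M.finiteGraph.Adj i j) :
        (if M j i = k then (1 : ZMod 2) else 0) = -if M i j = k then 1 else 0 := by
      rw [M.symmetric j i, ZMod.neg_eq_self_mod_two]
    obtain ⟨a, ha⟩ := exists_potential_of_edgeSum_eq_zero _ (hsymm 4)
      fun _ => M.edgeSum_finiteGraph_eq_zero 4 fun l hl h => (hcycles l hl h).1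
    obtain ⟨b, hb⟩ := exists_potential_of_edgeSum_eq_zero _ (hsymm 6)
      fun _ => M.edgeSum_finiteGraph_eq_zero 6 fun l hl h => (hcycles l hl h).2
    refine M.exists_cartan_of_weights (fun v => 2 ^ (a v).val * 3 ^ (b v).val)
      (fun v => by positivity) fun i j hij => ?_
    have hm : M i j = 3 ∨ M i j = 4 ∨ M i j = 6 := by
      have := hlabels i j (M.ne_of_three_le hij)
      simp only [Set.mem_insert_iff, Set.mem_singleton_iff] at this
      omega
    exact exists_weight_ratio_of_parity_step hm (ha i j hij) (hb i j hij)

/-- A Coxeter system arises as the Weyl group of a symmetrisable Kac–Moody Lie algebra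
(i.e. its Coxeter matrix comes from a symmetrisable generalised Cartan matrix via the usual
table) if and only if (1) all `m_{st} ∈ {2,3,4,6,∞}` and (2) in each circuit of the Coxeter
graph avoiding the label `∞` (formulated here via closed walks along edges with finite label),
the number of edges labelled `4` is even and the number of edges labelled `6` is even. -/
theorem statement19 (B : Type) [DecidableEq B] (W : Type) [Group W]
    (M : CoxeterMatrix B) (cs : CoxeterSystem M W) :
    (∃ C : Matrix B B ℤ,
      (∀ i, C i i = 2) ∧
      (∀ i j : B, i ≠ j → C i j ≤ 0) ∧
      (∃ d : B → ℚ, (∀ i, 0 < d i) ∧ ∀ i j : B, d i * (C i j : ℚ) = d j * (C j i : ℚ)) ∧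
      (∀ i j : B, i ≠ j → M i j = coxeterExponentOf (C i j * C j i))) ↔
    ((∀ i j : B, i ≠ j → M i j ∈ ({2, 3, 4, 6, 0} : Set ℕ)) ∧
      (∀ l : List B, l ≠ [] →
        (∀ p ∈ cyclePairs l, 3 ≤ M p.1 p.2) →
        Even ((cyclePairs l).countP (fun p => decide (M p.1 p.2 = 4))) ∧
        Even ((cyclePairs l).countP (fun p => decide (M p.1 p.2 = 6))))) :=
  statement19_general B M
end
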